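/- arXiv:2303.08653 — 4 statements merged into one kernel-verified Lean document; each statement's English description precedes it below -/
import Mathlib

section
/- Let V > 0, C > 0, and k > 2. There exists a finite constant Q, depending only on (C, k, V), such that for all σ > 0 and all Borel probability measures G0, G1 on ℝ with mean zero and variance bounded by V, if G1 satisfies the tail condition max(1 − G1((−∞,s]), G1((−∞,−s])) ≤ C·s^{−k} for all s > 0 (and the posterior second moment ∫ θ² φ_σ(x−θ) dG1(θ) / f_{G1,σ}(x) is finite for Lebesgue-almost every x), then ∫∫ m_{G1,σ}(x)² φ_σ(x−θ) dx dG0(θ) ≤ Q. -/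
open MeasureTheory Real Set

/-- The `N(0, σ²)` density `φ_σ(t) = (2πσ²)^{-1/2} exp(-t²/(2σ²))`. -/
noncomputable def gaussDens (σ t : ℝ) : ℝ :=
  (Real.sqrt (2 * Real.pi * σ ^ 2))⁻¹ * Real.exp (-t ^ 2 / (2 * σ ^ 2))

/-- Marginal density `f_{G,σ}(x) = ∫ φ_σ(x-θ) dG(θ)`. -/
noncomputable def margDens (G : Measure ℝ) (σ x : ℝ) : ℝ :=
  ∫ θ, gaussDens σ (x - θ) ∂G

/-- Posterior mean `m_{G,σ}(x) = (∫ θ φ_σ(x-θ) dG(θ)) / f_{G,σ}(x)`. -/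
noncomputable def postMean (G : Measure ℝ) (σ x : ℝ) : ℝ :=
  (∫ θ, θ * gaussDens σ (x - θ) ∂G) / margDens G σ x

/-- Posterior survival probability `S_{G,σ}(s,x) = (∫_{(s,∞)} φ_σ(x-θ) dG(θ)) / f_{G,σ}(x)`. -/
noncomputable def postSurv (G : Measure ℝ) (σ s x : ℝ) : ℝ :=
  (∫ θ in Set.Ioi s, gaussDens σ (x - θ)  ∂G) / margDens G σ x

/-- `G` has mean zero and variance bounded by `V`. -/
def MeanZeroVarLe (G : Measure ℝ) (V : ℝ) : Prop :=
  Integrable (fun θ : ℝ => θ) G ∧ Integrable (fun θ : ℝ => θ ^ 2) G ∧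
    (∫ θ, θ ∂G) = 0 ∧ (∫ θ, θ ^ 2 ∂G) ≤ V

/-- The tail condition `max(1 - G((-∞,s]), G((-∞,-s])) ≤ C s^{-k}` for all `s > 0`. -/
def TailCond (G : Measure ℝ) (C k : ℝ) : Prop :=
  ∀ s : ℝ, 0 < s →
    max (1 - (G (Set.Iic s)).toReal) ((G (Set.Iic (-s))).toReal) ≤ C * s ^ (-k)

/-- Complementary standard Gaussian CDF `Φ̄(x) = ∫_x^∞ (2π)^{-1/2} exp(-t²/2) dt`. -/
noncomputable def compPhi (x : ℝ) : ℝ :=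
  ∫ t in Set.Ioi x, (Real.sqrt (2 * Real.pi))⁻¹ * Real.exp (-t ^ 2 / 2)


set_option maxHeartbeats 1000000

lemma sqrt2pi_pos (σ : ℝ) (hσ : 0 < σ) : 0 < Real.sqrt (2 * Real.pi * σ ^ 2) := by
  apply Real.sqrt_pos.2; positivity

lemma gaussDens_pos {σ : ℝ} (hσ : 0 < σ) (t : ℝ) : 0 < gaussDens σ t := by
  unfold gaussDens
  have := sqrt2pi_pos σ hσ
  positivity

lemma gaussDens_le {σ : ℝ} (hσ : 0 < σ) (t : ℝ) :
    gaussDens σ t ≤ (Real.sqrt (2 * Real.pi * σ ^ 2))⁻¹ := by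
  unfold gaussDens
  have h1 := sqrt2pi_pos σ hσ
  nth_rewrite 2 [← mul_one (Real.sqrt (2 * Real.pi * σ ^ 2))⁻¹]
  apply mul_le_mul_of_nonneg_left _ (by positivity)
  rw [← Real.exp_zero]
  apply Real.exp_le_exp.2
  have : (0:ℝ) < 2 * σ ^ 2 := by positivity
  apply div_nonpos_of_nonpos_of_nonneg <;> [skip; positivity]
  simp [sq_nonneg t]

lemma gaussDens_mono {σ : ℝ} (hσ : 0 < σ) {t u : ℝ} (h : |t| ≤ |u|) :
    gaussDens σ u ≤ gaussDens σ t := by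
  unfold gaussDens
  apply mul_le_mul_of_nonneg_left _ (by positivity)
  apply Real.exp_le_exp.2
  have h2 : t ^ 2 ≤ u ^ 2 := by
    rw [← sq_abs t, ← sq_abs u]; exact pow_le_pow_left₀ (abs_nonneg t) h 2
  have h3 : (0:ℝ) < 2 * σ ^ 2 := by positivity
  have := neg_le_neg h2
  gcongr


lemma continuous_gaussDens (σ : ℝ) : Continuous (gaussDens σ) := by
  unfold gaussDens
  fun_prop


section ctx
variable {σ V C k : ℝ} {G : Measure ℝ} [IsProbabilityMeasure G]

lemma aesm_gauss (σ x : ℝ) :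
    AEStronglyMeasurable (fun θ : ℝ => gaussDens σ (x - θ)) G :=
  ((continuous_gaussDens σ).comp (continuous_const.sub continuous_id)).aestronglyMeasurable

lemma integrable_gauss (hσ : 0 < σ) (x : ℝ) :
    Integrable (fun θ : ℝ => gaussDens σ (x - θ)) G := by
  apply (integrable_const ((Real.sqrt (2 * Real.pi * σ ^ 2))⁻¹)).mono' (aesm_gauss σ x)
  filter_upwards with θ
  rw [Real.norm_eq_abs, abs_of_pos (gaussDens_pos hσ _)]
  exact gaussDens_le hσ _

lemma integrable_abs_mul_gauss (hσ : 0 < σ) (hθ : Integrable (fun θ : ℝ => θ) G) (x : ℝ) :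
    Integrable (fun θ : ℝ => |θ| * gaussDens σ (x - θ)) G := by
  apply (hθ.abs.const_mul ((Real.sqrt (2 * Real.pi * σ ^ 2))⁻¹)).mono'
  · exact (continuous_abs.mul ((continuous_gaussDens σ).comp
      (continuous_const.sub continuous_id))).aestronglyMeasurable
  · filter_upwards with θ
    have hg := (gaussDens_pos hσ (x - θ)).le
    rw [Real.norm_eq_abs, abs_of_nonneg (by positivity)]
    rw [mul_comm]
    exact mul_le_mul_of_nonneg_right (gaussDens_le hσ _) (abs_nonneg θ)

lemma margDens_pos (hσ : 0 < σ) (hG : MeanZeroVarLe G V) (hV : 0 < V) (x : ℝ) :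
    gaussDens σ (|x| + Real.sqrt (2*V)) ≤ 2 * margDens G σ x := by
  set a := Real.sqrt (2*V) with ha
  have ha0 : 0 < a := Real.sqrt_pos.2 (by linarith)
  have ha2 : a ^ 2 = 2 * V := Real.sq_sqrt (by linarith)
  -- Chebyshev : G {θ | a^2 ≤ θ^2} ≤ 1/2
  have hcheb : (G {θ : ℝ | a^2 ≤ θ^2}).toReal ≤ 1/2 := by
    have h1 := mul_meas_ge_le_integral_of_nonneg
      (f := fun θ : ℝ => θ^2) (μ := G)
      (Filter.Eventually.of_forall fun θ => sq_nonneg θ) hG.2.1 (a^2)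
    have h2 : (∫ θ, θ^2 ∂G) ≤ V := hG.2.2.2
    rw [measureReal_def] at h1
    nlinarith [ENNReal.toReal_nonneg (a := G {θ : ℝ | a^2 ≤ θ^2})]
  have hsub : (Set.Icc (-a) a)ᶜ ⊆ {θ : ℝ | a^2 ≤ θ^2} := by
    intro θ hθ
    simp only [Set.mem_compl_iff, Set.mem_Icc, not_and_or, not_le] at hθ
    rcases hθ with h | h <;> · simp only [Set.mem_setOf_eq]; nlinarith
  have hmeas : MeasurableSet (Set.Icc (-a) a) := measurableSet_Icc
  have hcompl : (G (Set.Icc (-a) a)ᶜ).toReal ≤ 1/2 := by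
    refine le_trans ?_ hcheb
    apply ENNReal.toReal_mono (measure_ne_top _ _) (measure_mono hsub)
  have hIcc : 1/2 ≤ (G (Set.Icc (-a) a)).toReal := by
    have := prob_compl_eq_one_sub (μ := G) hmeas
    have h1 : (G (Set.Icc (-a) a)ᶜ).toReal = 1 - (G (Set.Icc (-a) a)).toReal := by
      rw [this, ENNReal.toReal_sub_of_le (prob_le_one) (by simp)]
      simp
    linarith [h1 ▸ hcompl]
  have hIO : IntegrableOn (fun θ => gaussDens σ (x - θ)) (Set.Icc (-a) a) G :=
    (integrable_gauss hσ x).integrableOn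
  have hlow : gaussDens σ (|x| + a) * (G (Set.Icc (-a) a)).toReal
      ≤ ∫ θ in Set.Icc (-a) a, gaussDens σ (x - θ) ∂G := by
    refine setIntegral_ge_of_const_le_real hmeas (measure_ne_top _ _) (fun θ hθ => ?_) hIO
    apply gaussDens_mono hσ
    rw [Set.mem_Icc] at hθ
    have h1 : |x - θ| ≤ |x| + |θ| := abs_sub x θ
    have h2 : |θ| ≤ a := abs_le.2 ⟨hθ.1, hθ.2⟩
    have h3 : |(|x| + a)| = |x| + a := abs_of_nonneg (by positivity)
    rw [h3]; linarith
  have hfull : (∫ θ in Set.Icc (-a) a, gaussDens σ (x - θ) ∂G) ≤ margDens G σ x :=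
    setIntegral_le_integral (integrable_gauss hσ x)
      (Filter.Eventually.of_forall fun θ => (gaussDens_pos hσ _).le)
  have hg := gaussDens_pos hσ (|x| + a)
  nlinarith


lemma measS (T : ℝ) : MeasurableSet {θ : ℝ | T < |θ|} :=
  measurableSet_lt measurable_const continuous_abs.measurable

lemma margDens_pos' (hσ : 0 < σ) (hG : MeanZeroVarLe G V) (hV : 0 < V) (x : ℝ) :
    0 < margDens G σ x := by
  have h1 := margDens_pos hσ hG hV x
  have h2 := gaussDens_pos hσ (|x| + Real.sqrt (2*V))
  linarith

lemma abs_int_le (hG : MeanZeroVarLe G V) (hV : 0 < V) :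
    ∫ θ, |θ| ∂G ≤ (V+1)/2 := by
  have h : ∀ θ : ℝ, |θ| ≤ (θ^2 + 1)/2 := by
    intro θ
    nlinarith [sq_nonneg (|θ| - 1), sq_abs θ, abs_nonneg θ]
  calc ∫ θ, |θ| ∂G ≤ ∫ θ, (θ^2+1)/2 ∂G := by
        apply integral_mono hG.1.abs _ h
        exact ((hG.2.1.add (integrable_const 1)).div_const 2)
    _ = ((∫ θ, θ^2 ∂G) + 1)/2 := by
        rw [integral_div, integral_add hG.2.1 (integrable_const 1), integral_const]
        simp
    _ ≤ (V+1)/2 := by linarith [hG.2.2.2]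

lemma num_split (hσ : 0 < σ) (hG : MeanZeroVarLe G V) (x T : ℝ) (hT : 0 ≤ T) :
    |∫ θ, θ * gaussDens σ (x - θ) ∂G| ≤
      T * margDens G σ x + ∫ θ in {θ : ℝ | T < |θ|}, |θ| * gaussDens σ (x - θ) ∂G := by
  have hint := integrable_abs_mul_gauss hσ hG.1 x
  have h1 : |∫ θ, θ * gaussDens σ (x - θ) ∂G| ≤ ∫ θ, |θ| * gaussDens σ (x - θ) ∂G := by
    rw [← Real.norm_eq_abs]
    refine le_trans (norm_integral_le_integral_norm _) (le_of_eq ?_)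
    congr 1; funext θ
    rw [Real.norm_eq_abs, abs_mul, abs_of_pos (gaussDens_pos hσ _)]
  have h2 : (∫ θ, |θ| * gaussDens σ (x - θ) ∂G)
      = (∫ θ in {θ : ℝ | T < |θ|}ᶜ, |θ| * gaussDens σ (x - θ) ∂G)
        + ∫ θ in {θ : ℝ | T < |θ|}, |θ| * gaussDens σ (x - θ) ∂G := by
    rw [← integral_add_compl (measS T) hint]; ring
  have h3 : (∫ θ in {θ : ℝ | T < |θ|}ᶜ, |θ| * gaussDens σ (x - θ) ∂G)
      ≤ T * margDens G σ x := by
    have hb : (∫ θ in {θ : ℝ | T < |θ|}ᶜ, |θ| * gaussDens σ (x - θ) ∂G)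
        ≤ ∫ θ in {θ : ℝ | T < |θ|}ᶜ, T * gaussDens σ (x - θ) ∂G := by
      apply setIntegral_mono_on hint.integrableOn
        ((integrable_gauss hσ x).const_mul T).integrableOn (measS T).compl
      intro θ hθ
      simp only [Set.mem_compl_iff, Set.mem_setOf_eq, not_lt] at hθ
      exact mul_le_mul_of_nonneg_right hθ (gaussDens_pos hσ _).le
    refine le_trans hb ?_
    rw [MeasureTheory.integral_const_mul]
    apply mul_le_mul_of_nonneg_left _ hT
    exact setIntegral_le_integral (integrable_gauss hσ x)
      (Filter.Eventually.of_forall fun θ => (gaussDens_pos hσ _).le)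
  linarith

lemma tail_meas (htail : TailCond G C k) {T : ℝ} (hT : 0 < T) :
    (G {θ : ℝ | T < |θ|}).toReal ≤ 2 * C * T ^ (-k) := by
  have hsub : {θ : ℝ | T < |θ|} ⊆ Set.Iic (-T) ∪ Set.Ioi T := by
    intro θ hθ
    simp only [Set.mem_setOf_eq] at hθ
    rcases lt_abs.1 hθ with h | h
    · exact Or.inr h
    · exact Or.inl (by simp only [Set.mem_Iic]; linarith)
  have h1 : (G {θ : ℝ | T < |θ|}).toReal
      ≤ (G (Set.Iic (-T))).toReal + (G (Set.Ioi T)).toReal := by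
    refine le_trans (ENNReal.toReal_mono (measure_ne_top _ _) (measure_mono hsub)) ?_
    refine le_trans (ENNReal.toReal_mono ?_ (measure_union_le _ _)) ?_
    · exact (ENNReal.add_ne_top).2 ⟨measure_ne_top _ _, measure_ne_top _ _⟩
    · exact le_of_eq (ENNReal.toReal_add (measure_ne_top _ _) (measure_ne_top _ _))
  have h2 : (G (Set.Ioi T)).toReal = 1 - (G (Set.Iic T)).toReal := by
    have hc : (Set.Iic T)ᶜ = Set.Ioi T := Set.compl_Iic
    rw [← hc, prob_compl_eq_one_sub measurableSet_Iic,
      ENNReal.toReal_sub_of_le prob_le_one (by simp)]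
    simp
  have h3 := htail T hT
  have h4 : 1 - (G (Set.Iic T)).toReal ≤ C * T ^ (-k) :=
    le_trans (le_max_left _ _) h3
  have h5 : (G (Set.Iic (-T))).toReal ≤ C * T ^ (-k) :=
    le_trans (le_max_right _ _) h3
  have := h2 ▸ h1
  linarith

lemma tail_int (hσ : 0 < σ) (hG : MeanZeroVarLe G V) {ε : ℝ} (hε : 0 < ε) (x T : ℝ) :
    (∫ θ in {θ : ℝ | T < |θ|}, |θ| * gaussDens σ (x - θ) ∂G)
      ≤ (Real.sqrt (2 * Real.pi * σ ^ 2))⁻¹ *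
        (ε * V / 2 + (2*ε)⁻¹ * (G {θ : ℝ | T < |θ|}).toReal) := by
  set M := (Real.sqrt (2 * Real.pi * σ ^ 2))⁻¹ with hM
  have hM0 : 0 < M := by rw [hM]; exact inv_pos.2 (sqrt2pi_pos σ hσ)
  have hV' : (∫ θ, θ^2 ∂G) ≤ V := hG.2.2.2
  have step1 : (∫ θ in {θ : ℝ | T < |θ|}, |θ| * gaussDens σ (x - θ) ∂G)
      ≤ ∫ θ in {θ : ℝ | T < |θ|}, M * |θ| ∂G := by
    apply setIntegral_mono_on (integrable_abs_mul_gauss hσ hG.1 x).integrableOn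
      ((hG.1.abs.const_mul M).integrableOn) (measS T)
    intro θ _
    rw [mul_comm M]
    exact mul_le_mul_of_nonneg_left (gaussDens_le hσ _) (abs_nonneg θ)
  have step2 : (∫ θ in {θ : ℝ | T < |θ|}, M * |θ| ∂G)
      ≤ M * ∫ θ in {θ : ℝ | T < |θ|}, (ε * θ^2 / 2 + (2*ε)⁻¹) ∂G := by
    rw [MeasureTheory.integral_const_mul]
    apply mul_le_mul_of_nonneg_left _ hM0.le
    apply setIntegral_mono_on hG.1.abs.integrableOn
      (((hG.2.1.const_mul ε).div_const 2).add (integrable_const _)).integrableOn (measS T)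
    intro θ _
    simp only [Pi.add_apply]
    have h := sq_abs θ
    have key : 2*ε*|θ| ≤ ε^2*θ^2 + 1 := by nlinarith [sq_nonneg (ε * |θ| - 1)]
    have h2 : |θ| ≤ (ε^2*θ^2 + 1)/(2*ε) := by
      rw [le_div_iff₀ (by positivity)]; nlinarith
    have h3 : (ε^2*θ^2 + 1)/(2*ε) = ε * θ^2/2 + (2*ε)⁻¹ := by
      field_simp
    linarith [h3 ▸ h2]
  have step3 : (∫ θ in {θ : ℝ | T < |θ|}, (ε * θ^2 / 2 + (2*ε)⁻¹) ∂G)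
      ≤ ε * V / 2 + (2*ε)⁻¹ * (G {θ : ℝ | T < |θ|}).toReal := by
    rw [integral_add (((hG.2.1.const_mul ε).div_const 2).integrableOn)
      (integrable_const _).integrableOn, setIntegral_const]
    have h1 : (∫ θ in {θ : ℝ | T < |θ|}, ε * θ^2 / 2 ∂G) ≤ ε * V / 2 := by
      have : (∫ θ in {θ : ℝ | T < |θ|}, ε * θ^2 / 2 ∂G)
          = ε / 2 * ∫ θ in {θ : ℝ | T < |θ|}, θ^2 ∂G := by
        rw [← MeasureTheory.integral_const_mul]; congr 1; funext θ; ring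
      rw [this]
      have h2 : (∫ θ in {θ : ℝ | T < |θ|}, θ^2 ∂G) ≤ V :=
        le_trans (setIntegral_le_integral hG.2.1
          (Filter.Eventually.of_forall fun θ => sq_nonneg θ)) hV'
      have h3 : (0:ℝ) ≤ ε / 2 := by positivity
      calc ε / 2 * ∫ θ in {θ : ℝ | T < |θ|}, θ^2 ∂G ≤ ε / 2 * V :=
            mul_le_mul_of_nonneg_left h2 h3
        _ = ε * V / 2 := by ring
    have h4 : (G {θ : ℝ | T < |θ|}).toReal • (2*ε)⁻¹
        = (2*ε)⁻¹ * (G {θ : ℝ | T < |θ|}).toReal := by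
      rw [smul_eq_mul]; ring
    rw [measureReal_def]; linarith [h4]
  calc (∫ θ in {θ : ℝ | T < |θ|}, |θ| * gaussDens σ (x - θ) ∂G)
      ≤ M * ∫ θ in {θ : ℝ | T < |θ|}, (ε * θ^2 / 2 + (2*ε)⁻¹) ∂G := le_trans step1 step2
    _ ≤ M * (ε * V / 2 + (2*ε)⁻¹ * (G {θ : ℝ | T < |θ|}).toReal) :=
        mul_le_mul_of_nonneg_left step3 hM0.le

lemma crude_tail_int (hσ : 0 < σ) (hG : MeanZeroVarLe G V) (hV : 0 < V) (x : ℝ) :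
    (∫ θ in {θ : ℝ | 2*|x| + Real.sqrt (2*V) < |θ|}, |θ| * gaussDens σ (x - θ) ∂G)
      ≤ gaussDens σ (|x| + Real.sqrt (2*V)) * ((V+1)/2) := by
  set a := Real.sqrt (2*V) with ha
  have ha0 : 0 < a := Real.sqrt_pos.2 (by linarith)
  set T := 2*|x| + a with hTdef
  have hg0 := gaussDens_pos hσ (|x| + a)
  have step1 : (∫ θ in {θ : ℝ | T < |θ|}, |θ| * gaussDens σ (x - θ) ∂G)
      ≤ ∫ θ in {θ : ℝ | T < |θ|}, |θ| * gaussDens σ (|x| + a) ∂G := by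
    apply setIntegral_mono_on (integrable_abs_mul_gauss hσ hG.1 x).integrableOn
      (hG.1.abs.mul_const _).integrableOn (measS T)
    intro θ hθ
    simp only [Set.mem_setOf_eq] at hθ
    apply mul_le_mul_of_nonneg_left _ (abs_nonneg θ)
    apply gaussDens_mono hσ
    have h1 : |θ| - |x| ≤ |θ - x| := abs_sub_abs_le_abs_sub θ x
    have h2 : |θ - x| = |x - θ| := abs_sub_comm θ x
    have h3 : |(|x| + a)| = |x| + a := abs_of_nonneg (by positivity)
    rw [h3]
    simp only [hTdef] at hθ
    linarith
  have step2 : (∫ θ in {θ : ℝ | T < |θ|}, |θ| * gaussDens σ (|x| + a) ∂G)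
      ≤ gaussDens σ (|x| + a) * ((V+1)/2) := by
    have : (∫ θ in {θ : ℝ | T < |θ|}, |θ| * gaussDens σ (|x| + a) ∂G)
        = gaussDens σ (|x| + a) * ∫ θ in {θ : ℝ | T < |θ|}, |θ| ∂G := by
      rw [← MeasureTheory.integral_const_mul]; congr 1; funext θ; ring
    rw [this]
    apply mul_le_mul_of_nonneg_left _ hg0.le
    refine le_trans (setIntegral_le_integral hG.1.abs
      (Filter.Eventually.of_forall fun θ => abs_nonneg θ)) ?_
    exact abs_int_le hG hV
  exact le_trans step1 step2

lemma postMean_crude (hσ : 0 < σ) (hG : MeanZeroVarLe G V) (hV : 0 < V) (x : ℝ) :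
    |postMean G σ x| ≤ 2*|x| + Real.sqrt (2*V) + V + 1 := by
  set a := Real.sqrt (2*V) with ha
  have ha0 : 0 < a := Real.sqrt_pos.2 (by linarith)
  have hm0 := margDens_pos' hσ hG hV x
  have h1 := num_split hσ hG x (2*|x| + a) (by positivity)
  have h2 := crude_tail_int hσ hG hV x
  have h3 := margDens_pos hσ hG hV x
  have h4 : |∫ θ, θ * gaussDens σ (x - θ) ∂G|
      ≤ (2*|x| + a + V + 1) * margDens G σ x := by
    have hb : gaussDens σ (|x| + a) * ((V+1)/2) ≤ margDens G σ x * (V+1) := by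
      nlinarith
    nlinarith
  rw [postMean, abs_div, abs_of_pos hm0, div_le_iff₀ hm0]
  exact h4

lemma postMean_refined (hσ : 0 < σ) (hG : MeanZeroVarLe G V) (hV : 0 < V)
    (hC : 0 < C) (hk : 2 < k) (htail : TailCond G C k) (x : ℝ) :
    |postMean G σ x| ≤ (1 + V + 2*C) *
      Real.exp ((2/(k+2)) * ((|x| + Real.sqrt (2*V))^2 / (2*σ^2))) := by
  set a := Real.sqrt (2*V) with ha
  have ha0 : 0 < a := Real.sqrt_pos.2 (by linarith)
  set z := (|x| + a)^2 / (2*σ^2) with hz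
  have hz0 : 0 ≤ z := by positivity
  set γ := 2/(k+2) with hγ
  have hγ0 : 0 < γ := by rw [hγ]; positivity
  set T := Real.exp (γ * z) with hT
  have hT0 : 0 < T := Real.exp_pos _
  set ε := Real.exp (-(γ * z * k / 2)) with hε
  have hε0 : 0 < ε := Real.exp_pos _
  set M := (Real.sqrt (2 * Real.pi * σ ^ 2))⁻¹ with hM
  have hM0 : 0 < M := inv_pos.2 (sqrt2pi_pos σ hσ)
  have hm0 := margDens_pos' hσ hG hV x
  have hmarg := margDens_pos hσ hG hV x
  have h1 := num_split hσ hG x T hT0.le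
  have h2 := tail_int hσ hG hε0 x T
  have h3 := tail_meas htail hT0
  -- T ^ (-k) = exp (-(γ * z * k))
  have hTk : T ^ (-k) = Real.exp (-(γ * z * k)) := by
    rw [hT, ← Real.exp_mul]; ring_nf
  have h4 : (2*ε)⁻¹ * (2 * C * T ^ (-k)) = C * ε := by
    have he : ε⁻¹ * T ^ (-k) = ε := by
      rw [hε, hTk, ← Real.exp_neg, ← Real.exp_add]
      congr 1; ring
    calc (2*ε)⁻¹ * (2*C*T^(-k)) = C * (ε⁻¹ * T^(-k)) := by
          rw [mul_inv]; field_simp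
      _ = C * ε := by rw [he]
  have h5 : (∫ θ in {θ : ℝ | T < |θ|}, |θ| * gaussDens σ (x - θ) ∂G)
      ≤ M * ε * (V/2 + C) := by
    refine le_trans h2 ?_
    have hb : (2*ε)⁻¹ * (G {θ : ℝ | T < |θ|}).toReal ≤ C * ε := by
      rw [← h4]
      exact mul_le_mul_of_nonneg_left h3 (by positivity)
    have : ε * V / 2 + (2*ε)⁻¹ * (G {θ : ℝ | T < |θ|}).toReal
        ≤ ε * (V/2 + C) := by nlinarith
    calc M * (ε * V / 2 + (2*ε)⁻¹ * (G {θ : ℝ | T < |θ|}).toReal)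
        ≤ M * (ε * (V/2 + C)) := mul_le_mul_of_nonneg_left this hM0.le
      _ = M * ε * (V/2 + C) := by ring
  -- M * ε = gaussDens σ (|x|+a) * T
  have hgz : gaussDens σ (|x| + a) = M * Real.exp (-z) := by
    rw [gaussDens, hM, hz]
    congr 1
    ring
  have hMε : M * ε = gaussDens σ (|x| + a) * T := by
    have hMz : M = gaussDens σ (|x| + a) * Real.exp z := by
      rw [hgz, mul_assoc, ← Real.exp_add]
      simp
    rw [hMz, hε, hT, mul_assoc, ← Real.exp_add]
    congr 2
    have hk2 : k + 2 ≠ 0 := by linarith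
    rw [hγ]
    field_simp
    ring
  have h6 : M * ε * (V/2 + C) ≤ (V + 2*C) * T * margDens G σ x := by
    rw [hMε]
    have hVC : (0:ℝ) ≤ V/2 + C := by positivity
    nlinarith [hT0.le, mul_le_mul_of_nonneg_right hmarg (mul_nonneg hT0.le hVC)]
  have h7 : |∫ θ, θ * gaussDens σ (x - θ) ∂G|
      ≤ (1 + V + 2*C) * T * margDens G σ x := by
    have := le_trans h1 (by linarith : T * margDens G σ x +
      (∫ θ in {θ : ℝ | T < |θ|}, |θ| * gaussDens σ (x - θ) ∂G)
        ≤ T * margDens G σ x + (V + 2*C) * T * margDens G σ x)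
    linarith
  rw [postMean, abs_div, abs_of_pos hm0, div_le_iff₀ hm0]
  calc |∫ θ, θ * gaussDens σ (x - θ) ∂G| ≤ (1 + V + 2*C) * T * margDens G σ x := h7
    _ = (1 + V + 2*C) * Real.exp (γ * z) * margDens G σ x := by rw [hT]


end ctx

lemma gaussDens_eq (σ : ℝ) : gaussDens σ = fun t =>
    (Real.sqrt (2 * Real.pi * σ ^ 2))⁻¹ * Real.exp (-(2 * σ ^ 2)⁻¹ * t ^ 2) := by
  funext t; rw [gaussDens]; congr 1; rw [neg_div, div_eq_inv_mul, neg_mul]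

lemma integrable_gaussDens {σ : ℝ} (hσ : 0 < σ) : Integrable (gaussDens σ) := by
  rw [gaussDens_eq]
  exact (integrable_exp_neg_mul_sq (by positivity)).const_mul _

lemma integral_gaussDens {σ : ℝ} (hσ : 0 < σ) : ∫ t, gaussDens σ t = 1 := by
  rw [gaussDens_eq]
  rw [MeasureTheory.integral_const_mul, integral_gaussian]
  rw [show Real.pi / (2 * σ ^ 2)⁻¹ = 2 * Real.pi * σ ^ 2 by field_simp]
  exact inv_mul_cancel₀ (sqrt2pi_pos σ hσ).ne'

lemma sq_gaussDens_le {σ : ℝ} (hσ : 0 < σ) (t : ℝ) :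
    t ^ 2 * gaussDens σ t ≤ (4 * σ ^ 2) * ((Real.sqrt (2 * Real.pi * σ ^ 2))⁻¹
      * Real.exp (-(4 * σ ^ 2)⁻¹ * t ^ 2)) := by
  have hM : (0:ℝ) < (Real.sqrt (2 * Real.pi * σ ^ 2))⁻¹ := inv_pos.2 (sqrt2pi_pos σ hσ)
  rw [gaussDens]
  have hsplit : Real.exp (-t ^ 2 / (2 * σ ^ 2))
      = Real.exp (-(4 * σ ^ 2)⁻¹ * t ^ 2) * Real.exp (-(4 * σ ^ 2)⁻¹ * t ^ 2) := by
    rw [← Real.exp_add]; congr 1; field_simp; ring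
  rw [hsplit]
  rw [show (-(4 * σ ^ 2)⁻¹ * t ^ 2 : ℝ) = -((4 * σ ^ 2)⁻¹ * t ^ 2) by ring]
  set u : ℝ := (4 * σ ^ 2)⁻¹ * t ^ 2 with hu
  have hu0 : 0 ≤ u := by positivity
  have hkey : t ^ 2 * Real.exp (-u) ≤ 4 * σ ^ 2 := by
    have h1 : u ≤ Real.exp u := (Real.add_one_le_exp u).trans' (by linarith)
    have h2 : u * Real.exp (-u) ≤ 1 := by
      rw [Real.exp_neg]
      rw [mul_inv_le_iff₀ (Real.exp_pos u), one_mul]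
      exact h1
    have ht2 : t ^ 2 = 4 * σ ^ 2 * u := by rw [hu]; field_simp
    calc t ^ 2 * Real.exp (-u) = 4 * σ ^ 2 * (u * Real.exp (-u)) := by rw [ht2]; ring
      _ ≤ 4 * σ ^ 2 * 1 := by
          apply mul_le_mul_of_nonneg_left h2 (by positivity)
      _ = 4 * σ ^ 2 := by ring
  calc t ^ 2 * ((Real.sqrt (2 * Real.pi * σ ^ 2))⁻¹ *
        (Real.exp (-u) * Real.exp (-u)))
      = (t ^ 2 * Real.exp (-u)) * ((Real.sqrt (2 * Real.pi * σ ^ 2))⁻¹ * Real.exp (-u)) := by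
        ring
    _ ≤ (4 * σ ^ 2) * ((Real.sqrt (2 * Real.pi * σ ^ 2))⁻¹ * Real.exp (-u)) := by
        apply mul_le_mul_of_nonneg_right hkey (by positivity)

lemma integrable_sq_gaussDens {σ : ℝ} (hσ : 0 < σ) :
    Integrable (fun t => t ^ 2 * gaussDens σ t) := by
  apply Integrable.mono'
    (((integrable_exp_neg_mul_sq (show (0:ℝ) < (4*σ^2)⁻¹ by positivity)).const_mul
      ((Real.sqrt (2 * Real.pi * σ ^ 2))⁻¹)).const_mul (4 * σ ^ 2))
  · exact ((continuous_pow 2).mul (continuous_gaussDens σ)).aestronglyMeasurable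
  · filter_upwards with t
    have hg := (gaussDens_pos hσ t).le
    rw [Real.norm_eq_abs, abs_of_nonneg (by positivity)]
    exact sq_gaussDens_le hσ t

lemma integral_sq_gaussDens_le {σ : ℝ} (hσ : 0 < σ) :
    (∫ t, t ^ 2 * gaussDens σ t) ≤ 6 * σ ^ 2 := by
  have hint := ((integrable_exp_neg_mul_sq (show (0:ℝ) < (4*σ^2)⁻¹ by positivity)).const_mul
      ((Real.sqrt (2 * Real.pi * σ ^ 2))⁻¹)).const_mul (4 * σ ^ 2)
  have h1 : (∫ t, t ^ 2 * gaussDens σ t) ≤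
      ∫ t, (4 * σ ^ 2) * ((Real.sqrt (2 * Real.pi * σ ^ 2))⁻¹
        * Real.exp (-(4 * σ ^ 2)⁻¹ * t ^ 2)) := by
    apply integral_mono_of_nonneg
      (Filter.Eventually.of_forall fun t => ?_) hint
      (Filter.Eventually.of_forall fun t => sq_gaussDens_le hσ t)
    have hg := (gaussDens_pos hσ t).le
    positivity
  refine le_trans h1 ?_
  rw [MeasureTheory.integral_const_mul, MeasureTheory.integral_const_mul, integral_gaussian]
  have hs : Real.sqrt (Real.pi / (4 * σ ^ 2)⁻¹) = Real.sqrt 2 * Real.sqrt (2 * Real.pi * σ ^ 2) := by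
    rw [← Real.sqrt_mul (by norm_num)]
    congr 1
    field_simp
    ring
  rw [hs]
  have h2 : (Real.sqrt (2 * Real.pi * σ ^ 2))⁻¹ *
      (Real.sqrt 2 * Real.sqrt (2 * Real.pi * σ ^ 2)) = Real.sqrt 2 := by
    field_simp
  rw [h2]
  have h3 : Real.sqrt 2 ≤ 3/2 := by
    rw [show (3/2:ℝ) = Real.sqrt ((3/2)^2) by rw [Real.sqrt_sq]; norm_num]
    exact Real.sqrt_le_sqrt (by norm_num)
  nlinarith [sq_nonneg σ, Real.sqrt_nonneg 2]


/-! ### Constants depending only on `(C, k, V)` -/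

noncomputable def cgam (k : ℝ) : ℝ := 2/(k+2)
noncomputable def ceps (k : ℝ) : ℝ := (1 - 2*cgam k)/(2*(1+2*cgam k))
noncomputable def crho (k : ℝ) : ℝ := (1 - 2*cgam k)/4
noncomputable def cA1 (V k : ℝ) : ℝ := cgam k * (1 + 1/ceps k) * (Real.sqrt (2*V))^2
noncomputable def cK1 (V C k : ℝ) : ℝ :=
  (1+V+2*C)^2 * (Real.sqrt (2*crho k))⁻¹ * Real.exp 1 + 96 * cA1 V k
    + 2*(Real.sqrt (2*V)+V+1)^2
noncomputable def cK2 (V k : ℝ) : ℝ := 16 + 48/ceps k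

lemma cgam_pos {k : ℝ} (hk : 2 < k) : 0 < cgam k := by
  rw [cgam]; positivity
lemma cgam_lt_half {k : ℝ} (hk : 2 < k) : cgam k < 1/2 := by
  rw [cgam, div_lt_div_iff₀ (by linarith) (by norm_num)]; linarith
lemma ceps_pos {k : ℝ} (hk : 2 < k) : 0 < ceps k := by
  have h1 := cgam_pos hk; have h2 := cgam_lt_half hk
  rw [ceps]; apply div_pos <;> linarith
lemma ceps_le_one {k : ℝ} (hk : 2 < k) : ceps k ≤ 1 := by
  have h1 := cgam_pos hk; have h2 := cgam_lt_half hk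
  rw [ceps, div_le_one (by linarith)]; linarith
lemma crho_pos {k : ℝ} (hk : 2 < k) : 0 < crho k := by
  have h2 := cgam_lt_half hk
  rw [crho]; linarith
lemma crho_eq {k : ℝ} (hk : 2 < k) :
    crho k = (1 - ceps k)/2 - cgam k * (1 + ceps k) := by
  have h1 := cgam_pos hk; have h2 := cgam_lt_half hk
  rw [crho, ceps]
  have hne : 1 + 2*cgam k ≠ 0 := by linarith
  field_simp
  try ring
lemma cA1_eq {V k : ℝ} (hk : 2 < k) :
    ceps k * cA1 V k = cgam k * (ceps k + 1) * (Real.sqrt (2*V))^2 := by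
  have h := ceps_pos hk
  rw [cA1]
  field_simp
  try ring
lemma cA1_nonneg {V k : ℝ} (hV : 0 < V) (hk : 2 < k) : 0 ≤ cA1 V k := by
  have h1 := cgam_pos hk; have h2 := ceps_pos hk
  rw [cA1]; positivity

/-- Key algebraic inequality for the exponent comparison. -/
lemma key_alg {γ ε ρ A1 : ℝ} (a x θ0 : ℝ) (hγ : 0 < γ) (hε : 0 < ε) (hε1 : ε ≤ 1)
    (ha : 0 ≤ a) (hρ : ρ = (1-ε)/2 - γ*(1+ε)) (hA1 : ε*A1 = γ*(ε+1)*a^2) :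
    γ*(|x|+a)^2 - (x-θ0)^2/2 ≤ A1 + θ0^2/(2*ε) - ρ*x^2 := by
  rw [← mul_le_mul_iff_right₀ hε]
  have e2 : ε*(A1 + θ0^2/(2*ε) - ρ*x^2) = ε*A1 + θ0^2/2 - ε*ρ*x^2 := by
    field_simp
  rw [e2, hρ]
  have H1 : ε*(|x|+a)^2 ≤ ε*(1+ε)*x^2 + (ε+1)*a^2 := by
    rcases abs_cases x with ⟨h, _⟩ | ⟨h, _⟩ <;> rw [h] <;>
      nlinarith [sq_nonneg (ε*x - a), sq_nonneg (ε*x + a), hε.le]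
  have H1' : γ*(ε*(|x|+a)^2) ≤ γ*(ε*(1+ε)*x^2 + (ε+1)*a^2) :=
    mul_le_mul_of_nonneg_left H1 hγ.le
  have H2 : ε*(1-ε)*x^2 - (1-ε)*θ0^2 ≤ ε*(x-θ0)^2 := by
    nlinarith [sq_nonneg (ε*x - θ0)]
  nlinarith [H1', H2, hA1, mul_nonneg hε.le (sq_nonneg θ0)]


lemma integral_expquad {σ ρ : ℝ} (hσ : 0 < σ) (hρ : 0 < ρ) :
    (Real.sqrt (2 * Real.pi * σ ^ 2))⁻¹ * ∫ x : ℝ, Real.exp (-(ρ/σ^2) * x^2)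
      = (Real.sqrt (2*ρ))⁻¹ := by
  rw [integral_gaussian]
  have h : Real.pi / (ρ/σ^2) = (2*Real.pi*σ^2) * (2*ρ)⁻¹ := by
    field_simp
  rw [h, Real.sqrt_mul (show (0:ℝ) ≤ 2*Real.pi*σ^2 by positivity) ((2*ρ)⁻¹), Real.sqrt_inv]
  rw [inv_mul_cancel_left₀ (sqrt2pi_pos σ hσ).ne']

lemma inner_bound {V C k σ : ℝ} {G : Measure ℝ} [IsProbabilityMeasure G]
    (hV : 0 < V) (hC : 0 < C) (hk : 2 < k) (hσ : 0 < σ)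
    (hG : MeanZeroVarLe G V) (htail : TailCond G C k) (θ0 : ℝ) :
    (∫ x, (postMean G σ x)^2 * gaussDens σ (x - θ0))
      ≤ cK1 V C k + cK2 V k * θ0^2 := by
  have hγ0 := cgam_pos hk
  have hγh := cgam_lt_half hk
  have hε0 := ceps_pos hk
  have hε1 := ceps_le_one hk
  have hρ0 := crho_pos hk
  have hA10 := cA1_nonneg hV hk
  have hσ2 : (0:ℝ) < σ^2 := by positivity
  set a := Real.sqrt (2*V) with ha
  have ha0 : 0 ≤ a := Real.sqrt_nonneg _
  have hc50 : (0:ℝ) ≤ (1+V+2*C)^2 * (Real.sqrt (2*crho k))⁻¹ * Real.exp 1 := by positivity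
  have hc20 : (0:ℝ) ≤ a + V + 1 := by positivity
  have hnonneg : ∀ x : ℝ, 0 ≤ (postMean G σ x)^2 * gaussDens σ (x - θ0) := by
    intro x
    have := (gaussDens_pos hσ (x - θ0)).le
    positivity
  by_cases hcase : σ^2 ≤ cA1 V k + θ0^2/(2*ceps k)
  · -- small σ : use the crude bound
    set c2 := a + V + 1 with hc2
    have hpt : ∀ x : ℝ, (postMean G σ x)^2 * gaussDens σ (x-θ0)
        ≤ 16*((x-θ0)^2 * gaussDens σ (x-θ0)) + (16*θ0^2+2*c2^2) * gaussDens σ (x-θ0) := by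
      intro x
      have hb := postMean_crude hσ hG hV x
      have hg := (gaussDens_pos hσ (x-θ0)).le
      have hsq : (postMean G σ x)^2 ≤ (2*|x| + c2)^2 := by
        have h1 := abs_nonneg (postMean G σ x)
        have h2 := sq_abs (postMean G σ x)
        have h3 : |postMean G σ x| ≤ 2*|x| + c2 := by rw [hc2, ha]; linarith [hb]
        nlinarith [abs_nonneg x]
      have hx : (2*|x| + c2)^2 ≤ 16*(x-θ0)^2 + 16*θ0^2 + 2*c2^2 := by
        nlinarith [sq_abs x, sq_nonneg (2*|x| - c2), sq_nonneg (x - 2*θ0), abs_nonneg x]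
      have := mul_le_mul_of_nonneg_right (hsq.trans hx) hg
      nlinarith [this]
    have hint1 : Integrable (fun x : ℝ => (x-θ0)^2 * gaussDens σ (x-θ0)) :=
      (integrable_sq_gaussDens hσ).comp_sub_right θ0
    have hint2 : Integrable (fun x : ℝ => gaussDens σ (x-θ0)) :=
      (integrable_gaussDens hσ).comp_sub_right θ0
    have hgint : Integrable (fun x : ℝ => 16*((x-θ0)^2 * gaussDens σ (x-θ0))
        + (16*θ0^2+2*c2^2) * gaussDens σ (x-θ0)) :=
      (hint1.const_mul 16).add (hint2.const_mul _)
    have hmono := integral_mono_of_nonneg (Filter.Eventually.of_forall hnonneg) hgint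
      (Filter.Eventually.of_forall hpt)
    have hval : (∫ x : ℝ, (16*((x-θ0)^2 * gaussDens σ (x-θ0))
        + (16*θ0^2+2*c2^2) * gaussDens σ (x-θ0))) ≤ 96*σ^2 + 16*θ0^2 + 2*c2^2 := by
      rw [integral_add (hint1.const_mul 16) (hint2.const_mul _),
        MeasureTheory.integral_const_mul, MeasureTheory.integral_const_mul]
      have e1 : (∫ x : ℝ, (x-θ0)^2 * gaussDens σ (x-θ0)) = ∫ t : ℝ, t^2 * gaussDens σ t :=
        integral_sub_right_eq_self (fun t => t^2 * gaussDens σ t) θ0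
      have e2 : (∫ x : ℝ, gaussDens σ (x-θ0)) = ∫ t : ℝ, gaussDens σ t :=
        integral_sub_right_eq_self (fun t => gaussDens σ t) θ0
      rw [e1, e2, integral_gaussDens hσ]
      have := integral_sq_gaussDens_le hσ
      nlinarith [sq_nonneg θ0, sq_nonneg c2]
    have hfin : 96*σ^2 ≤ 96*cA1 V k + 48/ceps k * θ0^2 := by
      have h48 : 96*(θ0^2/(2*ceps k)) = 48/ceps k * θ0^2 := by
        field_simp
        ring
      nlinarith [hcase]
    rw [cK1, cK2]
    have : (∫ x, (postMean G σ x)^2 * gaussDens σ (x - θ0))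
        ≤ 96*σ^2 + 16*θ0^2 + 2*c2^2 := le_trans hmono hval
    rw [hc2, ha] at this
    nlinarith [this, hfin, sq_nonneg θ0]
  · -- large σ : use the refined bound
    push_neg at hcase
    set γ := cgam k with hγ
    set ε := ceps k with hε
    set ρ := crho k with hρ
    set A1 := cA1 V k with hA1
    set R := A1 + θ0^2/(2*ε) with hR
    set c1 := 1+V+2*C with hc1
    set M := (Real.sqrt (2 * Real.pi * σ ^ 2))⁻¹ with hM
    have hM0 : 0 < M := inv_pos.2 (sqrt2pi_pos σ hσ)
    have hc10 : 0 < c1 := by rw [hc1]; linarith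
    have hR0 : 0 ≤ R := by
      rw [hR]; have : (0:ℝ) ≤ θ0^2/(2*ε) := by positivity
      linarith
    have hRσ : R ≤ σ^2 := hcase.le
    have hρσ : (0:ℝ) < ρ/σ^2 := by positivity
    have hpt : ∀ x : ℝ, (postMean G σ x)^2 * gaussDens σ (x-θ0)
        ≤ c1^2*M*Real.exp (R/σ^2) * Real.exp (-(ρ/σ^2)*x^2) := by
      intro x
      set z := (|x|+a)^2/(2*σ^2) with hz
      have hm : |postMean G σ x| ≤ c1 * Real.exp (γ*z) := by
        have h := postMean_refined hσ hG hV hC hk htail x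
        rw [hc1, hγ, cgam, hz, ha]
        exact h
      have hm2 : (postMean G σ x)^2 ≤ c1^2 * Real.exp (γ*z + γ*z) := by
        have h1 : (postMean G σ x)^2 = |postMean G σ x|^2 := (sq_abs _).symm
        have h2 : |postMean G σ x|^2 ≤ (c1 * Real.exp (γ*z))^2 :=
          pow_le_pow_left₀ (abs_nonneg _) hm 2
        have h3 : (c1 * Real.exp (γ*z))^2 = c1^2 * Real.exp (γ*z + γ*z) := by
          rw [mul_pow, sq (Real.exp (γ*z)), ← Real.exp_add]
        rw [h1]; rw [h3] at h2; exact h2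
      have hgauss : gaussDens σ (x-θ0) = M * Real.exp (-(x-θ0)^2/(2*σ^2)) := by
        rw [gaussDens, hM]
      have key : γ*(|x|+a)^2 - (x-θ0)^2/2 ≤ A1 + θ0^2/(2*ε) - ρ*x^2 :=
        key_alg a x θ0 hγ0 hε0 hε1 ha0 (by rw [hρ, hγ, hε]; exact crho_eq hk)
          (by rw [hε, hA1, ha]; exact cA1_eq hk)
      have hexp : γ*z + γ*z + (-(x-θ0)^2/(2*σ^2)) ≤ R/σ^2 + (-(ρ/σ^2)*x^2) := by
        rw [← mul_le_mul_iff_right₀ hσ2]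
        have e1 : σ^2 * (γ*z + γ*z + (-(x-θ0)^2/(2*σ^2)))
            = γ*(|x|+a)^2 - (x-θ0)^2/2 := by
          rw [hz]; field_simp; ring
        have e2 : σ^2 * (R/σ^2 + (-(ρ/σ^2)*x^2)) = R - ρ*x^2 := by
          field_simp
          try ring
        rw [e1, e2, hR]
        linarith [key]
      calc (postMean G σ x)^2 * gaussDens σ (x-θ0)
          ≤ (c1^2 * Real.exp (γ*z + γ*z)) * (M * Real.exp (-(x-θ0)^2/(2*σ^2))) := by
            rw [hgauss]
            have hMe : (0:ℝ) ≤ M * Real.exp (-(x-θ0)^2/(2*σ^2)) := by positivity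
            exact mul_le_mul_of_nonneg_right hm2 hMe
        _ = c1^2 * M * Real.exp (γ*z + γ*z + (-(x-θ0)^2/(2*σ^2))) := by
            rw [Real.exp_add (γ*z + γ*z)]; ring
        _ ≤ c1^2 * M * Real.exp (R/σ^2 + (-(ρ/σ^2)*x^2)) := by
            apply mul_le_mul_of_nonneg_left (Real.exp_le_exp.2 hexp) (by positivity)
        _ = c1^2*M*Real.exp (R/σ^2) * Real.exp (-(ρ/σ^2)*x^2) := by
            rw [Real.exp_add]; ring
    have hgint : Integrable (fun x : ℝ => c1^2*M*Real.exp (R/σ^2) * Real.exp (-(ρ/σ^2)*x^2)) :=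
      (integrable_exp_neg_mul_sq hρσ).const_mul _
    have hmono := integral_mono_of_nonneg (Filter.Eventually.of_forall hnonneg) hgint
      (Filter.Eventually.of_forall hpt)
    have hval : (∫ x : ℝ, c1^2*M*Real.exp (R/σ^2) * Real.exp (-(ρ/σ^2)*x^2))
        = c1^2 * Real.exp (R/σ^2) * (Real.sqrt (2*ρ))⁻¹ := by
      rw [MeasureTheory.integral_const_mul]
      rw [show c1^2*M*Real.exp (R/σ^2) * (∫ x : ℝ, Real.exp (-(ρ/σ^2)*x^2))
        = c1^2*Real.exp (R/σ^2) * (M * ∫ x : ℝ, Real.exp (-(ρ/σ^2)*x^2)) from by ring]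
      rw [integral_expquad hσ hρ0]
    have hle : c1^2 * Real.exp (R/σ^2) * (Real.sqrt (2*ρ))⁻¹
        ≤ c1^2 * (Real.sqrt (2*ρ))⁻¹ * Real.exp 1 := by
      have h1 : R/σ^2 ≤ 1 := by rw [div_le_one hσ2]; exact hRσ
      have h2 : Real.exp (R/σ^2) ≤ Real.exp 1 := Real.exp_le_exp.2 h1
      have h3 : (0:ℝ) ≤ c1^2 * (Real.sqrt (2*ρ))⁻¹ := by positivity
      calc c1^2 * Real.exp (R/σ^2) * (Real.sqrt (2*ρ))⁻¹
          = c1^2 * (Real.sqrt (2*ρ))⁻¹ * Real.exp (R/σ^2) := by ring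
        _ ≤ c1^2 * (Real.sqrt (2*ρ))⁻¹ * Real.exp 1 :=
            mul_le_mul_of_nonneg_left h2 h3
    have hK2 : (0:ℝ) ≤ cK2 V k * θ0^2 := by
      rw [cK2]
      have : (0:ℝ) ≤ 48/ε := by positivity
      rw [← hε]
      positivity
    rw [cK1]
    have hrest : (0:ℝ) ≤ 96 * cA1 V k + 2*(Real.sqrt (2*V)+V+1)^2 := by positivity
    calc (∫ x, (postMean G σ x)^2 * gaussDens σ (x - θ0))
        ≤ c1^2 * Real.exp (R/σ^2) * (Real.sqrt (2*ρ))⁻¹ := hval ▸ hmono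
      _ ≤ c1^2 * (Real.sqrt (2*ρ))⁻¹ * Real.exp 1 := hle
      _ ≤ (1+V+2*C)^2 * (Real.sqrt (2*crho k))⁻¹ * Real.exp 1 + 96 * cA1 V k
            + 2*(Real.sqrt (2*V)+V+1)^2 + cK2 V k * θ0^2 := by
          rw [hc1, hρ]; linarith

/-- uniform boundedness of the second moment of the `G1`-posterior mean
under `θ ~ G0`, with constant depending only on `(C, k, V)`. -/
theorem stmt_0 (V C k : ℝ) (hV : 0 < V) (hC : 0 < C) (hk : 2 < k) :
    ∃ Q : ℝ, ∀ (σ : ℝ) (G0 G1 : Measure ℝ)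
      [IsProbabilityMeasure G0] [IsProbabilityMeasure G1],
      0 < σ → MeanZeroVarLe G0 V → MeanZeroVarLe G1 V → TailCond G1 C k →
      (∀ᵐ x ∂(volume : Measure ℝ),
        Integrable (fun θ : ℝ => θ ^ 2 * gaussDens σ (x - θ)) G1) →
      (∫ θ, (∫ x, (postMean G1 σ x) ^ 2 * gaussDens σ (x - θ)) ∂G0) ≤ Q := by
  refine ⟨cK1 V C k + cK2 V k * V, ?_⟩
  intro σ G0 G1 _ _ hσ hG0 hG1 htail _
  have hinner : ∀ θ0 : ℝ, (∫ x, (postMean G1 σ x)^2 * gaussDens σ (x - θ0))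
      ≤ cK1 V C k + cK2 V k * θ0^2 := fun θ0 => inner_bound hV hC hk hσ hG1 htail θ0
  have h0 : ∀ θ0 : ℝ, 0 ≤ ∫ x, (postMean G1 σ x)^2 * gaussDens σ (x-θ0) := by
    intro θ0
    apply integral_nonneg
    intro x
    have := (gaussDens_pos hσ (x - θ0)).le
    positivity
  have hgi : Integrable (fun θ : ℝ => cK1 V C k + cK2 V k * θ^2) G0 :=
    (integrable_const _).add (hG0.2.1.const_mul _)
  have hmono := integral_mono_of_nonneg (Filter.Eventually.of_forall h0) hgi
    (Filter.Eventually.of_forall hinner)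
  refine le_trans hmono ?_
  rw [integral_add (integrable_const _) (hG0.2.1.const_mul _), integral_const,
    MeasureTheory.integral_const_mul]
  simp only [measure_univ, probReal_univ, ENNReal.toReal_one, smul_eq_mul, one_mul]
  have hK2 : (0:ℝ) ≤ cK2 V k := by
    have := ceps_pos hk
    rw [cK2]
    positivity
  nlinarith [hG0.2.2.2, hK2]
end

section
/- Suppose G1 is a Borel probability measure on ℝ with mean zero and variance bounded by V, and let σ > 0. Then for every real x, the marginal density satisfies f_{G1,σ}(x) ≥ (2πσ²)^{−1/2} exp(−(x² + V)/(2σ²)); equivalently, 1/f_{G1,σ}(x) ≤ √(2π) σ exp((x² + V)/(2σ²)). -/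
open MeasureTheory Real Set

/-- lower bound on the marginal density
`f_{G1,σ}(x) ≥ (2πσ²)^{-1/2} exp(-(x²+V)/(2σ²))` and the equivalent upper bound
`1/f_{G1,σ}(x) ≤ √(2π) σ exp((x²+V)/(2σ²))`. -/
theorem stmt_5 (V σ : ℝ) (hσ : 0 < σ) (G1 : Measure ℝ)
    [IsProbabilityMeasure G1] (hG1 : MeanZeroVarLe G1 V) (x : ℝ) :
    (Real.sqrt (2 * Real.pi * σ ^ 2))⁻¹ * Real.exp (-(x ^ 2 + V) / (2 * σ ^ 2))
        ≤ margDens G1 σ x ∧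
      (margDens G1 σ x)⁻¹
        ≤ Real.sqrt (2 * Real.pi) * σ * Real.exp ((x ^ 2 + V) / (2 * σ ^ 2)) := by
  obtain ⟨hint1, hint2, hmean, hvar⟩ := hG1
  have hσ2 : (0:ℝ) < 2 * σ ^ 2 := by positivity
  set c := (Real.sqrt (2 * Real.pi * σ ^ 2))⁻¹ with hc
  have hcpos : 0 < c := by
    rw [hc]
    have : (0:ℝ) < 2 * Real.pi * σ ^ 2 := by positivity
    positivity
  -- the exponent function
  set h : ℝ → ℝ := fun θ => -(x - θ) ^ 2 / (2 * σ ^ 2) with hh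
  have hhint : Integrable h G1 := by
    have : h = fun θ => (-(1 / (2 * σ ^ 2))) * θ ^ 2 + ((x / σ ^ 2) * θ + (-(x^2) / (2 * σ ^ 2))) := by
      funext θ; rw [hh]; field_simp; ring
    rw [this]
    exact ((hint2.const_mul _).add (((hint1.const_mul _)).add (integrable_const _)))
  have hexpint : Integrable (fun θ => Real.exp (h θ)) G1 := by
    apply Integrable.mono' (integrable_const 1)
    · exact (Real.continuous_exp.comp (by continuity : Continuous h)).aestronglyMeasurable
    · filter_upwards with θ
      rw [Real.norm_eq_abs, abs_of_pos (Real.exp_pos _)]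
      apply Real.exp_le_one_iff.mpr
      rw [hh]
      exact div_nonpos_of_nonpos_of_nonneg (neg_nonpos.mpr (sq_nonneg _)) hσ2.le
  have jensen : Real.exp (∫ θ, h θ ∂G1) ≤ ∫ θ, Real.exp (h θ) ∂G1 := by
    have := convexOn_exp.map_integral_le (μ := G1) (f := h)
      Real.continuous_exp.continuousOn isClosed_univ
      (Filter.Eventually.of_forall fun _ => Set.mem_univ _) hhint hexpint
    simpa using this
  have hinth : ∫ θ, h θ ∂G1 = -(x ^ 2 + ∫ θ, θ ^ 2 ∂G1) / (2 * σ ^ 2) := by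
    have : h = fun θ => (-(1 / (2 * σ ^ 2))) * θ ^ 2 + ((x / σ ^ 2) * θ + (-(x^2) / (2 * σ ^ 2))) := by
      funext θ; rw [hh]; field_simp; ring
    have hg2 : Integrable (fun θ : ℝ => x / σ ^ 2 * θ + -x ^ 2 / (2 * σ ^ 2)) G1 :=
      (hint1.const_mul _).add (integrable_const _)
    have hg1 : Integrable (fun θ : ℝ => -(1 / (2 * σ ^ 2)) * θ ^ 2) G1 := hint2.const_mul _
    have hg3 : Integrable (fun θ : ℝ => x / σ ^ 2 * θ) G1 := hint1.const_mul _
    simp only [this]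
    rw [integral_add hg1 hg2, integral_add hg3 (integrable_const _),
      integral_const_mul, integral_const_mul, hmean, integral_const]
    simp
    ring
  have key : Real.exp (-(x ^ 2 + V) / (2 * σ ^ 2)) ≤ ∫ θ, Real.exp (h θ) ∂G1 := by
    refine le_trans (Real.exp_le_exp.mpr ?_) (hinth ▸ jensen)
    gcongr
  have hmd : margDens G1 σ x = c * ∫ θ, Real.exp (h θ) ∂G1 := by
    rw [margDens, ← integral_const_mul]
    rfl
  have h1 : c * Real.exp (-(x ^ 2 + V) / (2 * σ ^ 2)) ≤ margDens G1 σ x := by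
    rw [hmd]
    exact mul_le_mul_of_nonneg_left key hcpos.le
  refine ⟨h1, ?_⟩
  have hpos : 0 < margDens G1 σ x :=
    lt_of_lt_of_le (by positivity) h1
  have hsq : Real.sqrt (2 * Real.pi * σ ^ 2) = Real.sqrt (2 * Real.pi) * σ := by
    rw [Real.sqrt_mul (by positivity), Real.sqrt_sq hσ.le]
  rw [inv_le_comm₀ hpos (by positivity)]
  calc (Real.sqrt (2 * Real.pi) * σ * Real.exp ((x ^ 2 + V) / (2 * σ ^ 2)))⁻¹
      = c * Real.exp (-(x ^ 2 + V) / (2 * σ ^ 2)) := by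
        rw [hc, hsq, mul_inv, ← Real.exp_neg, neg_div]
    _ ≤ margDens G1 σ x := h1
end

section
/- Suppose G1 is a Borel probability measure on ℝ with mean zero and variance bounded by V, and let σ > 0. Then for every real x, (m_{G1,σ}(x) − x)² ≤ x² + V. -/
open MeasureTheory Real Set

lemma cheb_aux {μ : Measure ℝ} [IsProbabilityMeasure μ] {u g : ℝ → ℝ}
    (hu : Integrable u μ) (hg : Integrable g μ)
    (hug : Integrable (fun a => u a * g a) μ)
    (h : ∀ a b, (u a - u b) * (g a - g b) ≤ 0) :
    ∫ a, u a * g a ∂μ ≤ (∫ a, u a ∂μ) * (∫ a, g a ∂μ) := by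
  set A := ∫ a, u a ∂μ with hA
  set B := ∫ a, g a ∂μ with hB
  set C := ∫ a, u a * g a ∂μ with hC
  have key : ∀ b, C - A * g b - B * u b + u b * g b ≤ 0 := by
    intro b
    have h1 : ∫ a, (u a - u b) * (g a - g b) ∂μ ≤ 0 :=
      integral_nonpos (fun a => h a b)
    have i1 : Integrable (fun a => u a * g a - g b * u a) μ :=
      hug.sub (hu.const_mul (g b))
    have i2 : Integrable (fun a => u a * g a - g b * u a - u b * g a) μ :=
      i1.sub (hg.const_mul (u b))
    have h2 : ∫ a, (u a - u b) * (g a - g b) ∂μ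
        = C - A * g b - B * u b + u b * g b := by
      have e : (fun a => (u a - u b) * (g a - g b))
          = fun a => (u a * g a - g b * u a - u b * g a) + u b * g b := by
        funext a; ring
      rw [e, integral_add i2 (integrable_const _), integral_sub i1 (hg.const_mul (u b)),
        integral_sub hug (hu.const_mul (g b)), integral_const_mul, integral_const_mul,
        integral_const]
      simp [hA, hB, hC]
      ring
    linarith [h2 ▸ h1]
  have hmono : ∫ b, (C + u b * g b) ∂μ ≤ ∫ b, (A * g b + B * u b) ∂μ := by
    apply integral_mono ((integrable_const C).add hug)
      ((hg.const_mul A).add (hu.const_mul B))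
    intro b; have := key b; dsimp; linarith
  rw [integral_add (integrable_const C) hug, integral_add (hg.const_mul A)
    (hu.const_mul B), integral_const, integral_const_mul, integral_const_mul] at hmono
  simp at hmono
  nlinarith [hmono]

/-- `(m_{G1,σ}(x) - x)² ≤ x² + V`. -/
theorem stmt_7 (V σ : ℝ) (hσ : 0 < σ) (G1 : Measure ℝ)
    [IsProbabilityMeasure G1] (hG1 : MeanZeroVarLe G1 V) (x : ℝ) :
    (postMean G1 σ x - x) ^ 2 ≤ x ^ 2 + V := by
  obtain ⟨hi1, hi2, hm0, hv⟩ := hG1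
  set c : ℝ := (Real.sqrt (2 * Real.pi * σ ^ 2))⁻¹ with hc
  have hcpos : 0 < c := by
    apply inv_pos.2
    apply Real.sqrt_pos.2
    positivity
  set g : ℝ → ℝ := fun θ => gaussDens σ (x - θ) with hgdef
  set u : ℝ → ℝ := fun θ => (θ - x) ^ 2 with hudef
  have hgeq : ∀ θ, g θ = c * Real.exp (-u θ / (2 * σ ^ 2)) := by
    intro θ
    simp only [hgdef, gaussDens, hudef, hc]
    have : (x - θ) ^ 2 = (θ - x) ^ 2 := by ring
    rw [this]
  have hgpos : ∀ θ, 0 < g θ := fun θ => by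
    rw [hgeq]; positivity
  have hgle : ∀ θ, g θ ≤ c := by
    intro θ
    rw [hgeq]
    nth_rewrite 2 [show c = c * 1 by ring]
    apply mul_le_mul_of_nonneg_left _ hcpos.le
    apply Real.exp_le_one_iff.2
    apply div_nonpos_of_nonpos_of_nonneg
    · simp only [hudef, neg_nonpos]; positivity
    · positivity
  have hgcont : Continuous g := by
    simp only [hgdef, gaussDens]
    fun_prop
  have hgint : Integrable g G1 := by
    apply Integrable.mono' (integrable_const c) hgcont.aestronglyMeasurable
    filter_upwards with θ
    rw [Real.norm_eq_abs, abs_of_pos (hgpos θ)]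
    exact hgle θ
  have huint : Integrable u G1 := by
    have e : u = fun θ => θ ^ 2 - (2 * x) * θ + x ^ 2 := by
      funext θ; simp only [hudef]; ring
    rw [e]
    exact (hi2.sub (hi1.const_mul _)).add (integrable_const _)
  have hugint : Integrable (fun θ => u θ * g θ) G1 := by
    apply Integrable.mono' (huint.const_mul c)
    · exact (((continuous_id.sub continuous_const).pow 2).mul hgcont).aestronglyMeasurable
    · filter_upwards with θ
      rw [Real.norm_eq_abs, abs_of_nonneg (mul_nonneg (sq_nonneg _) (hgpos θ).le)]
      calc u θ * g θ ≤ u θ * c := mul_le_mul_of_nonneg_left (hgle θ) (sq_nonneg _)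
        _ = c * u θ := by ring
  have hθgint : Integrable (fun θ => θ * g θ) G1 := by
    apply Integrable.mono' (hi1.abs.const_mul c)
    · exact continuous_id.aestronglyMeasurable.mul hgcont.aestronglyMeasurable
    · filter_upwards with θ
      rw [Real.norm_eq_abs, abs_mul, abs_of_pos (hgpos θ)]
      calc |θ| * g θ ≤ |θ| * c := mul_le_mul_of_nonneg_left (hgle θ) (abs_nonneg _)
        _ = c * |θ| := by ring
  have hhgint : Integrable (fun θ => (θ - x) * g θ) G1 := by
    have e : (fun θ => (θ - x) * g θ) = fun θ => θ * g θ - x * g θ := by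
      funext θ; ring
    rw [e]
    exact hθgint.sub (hgint.const_mul x)
  set B : ℝ := ∫ θ, g θ ∂G1 with hB
  have hBeq : margDens G1 σ x = B := rfl
  have hBpos : 0 < B := by
    rw [hB, integral_pos_iff_support_of_nonneg (fun θ => (hgpos θ).le) hgint]
    have hs : Function.support g = Set.univ := by
      ext θ; simp [Function.mem_support, (hgpos θ).ne']
    rw [hs]
    simp
  set N : ℝ := ∫ θ, (θ - x) * g θ ∂G1 with hN
  have hNeq : ∫ θ, θ * g θ ∂G1 = N + x * B := by
    rw [hN, hB, ← integral_const_mul, ← integral_add hhgint (hgint.const_mul x)]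
    congr 1; funext θ; ring
  have hmx : postMean G1 σ x - x = N / B := by
    have hpm : postMean G1 σ x = (∫ θ, θ * g θ ∂G1) / B := rfl
    rw [hpm, hNeq]
    field_simp
    ring
  set t : ℝ := N / B with ht
  have hCS : 0 ≤ ∫ θ, ((θ - x) - t) ^ 2 * g θ ∂G1 :=
    integral_nonneg (fun θ => mul_nonneg (sq_nonneg _) (hgpos θ).le)
  have hCSexp : ∫ θ, ((θ - x) - t) ^ 2 * g θ ∂G1
      = (∫ θ, u θ * g θ ∂G1) - 2 * t * N + t ^ 2 * B := by
    have i1 : Integrable (fun θ => u θ * g θ - (2 * t) * ((θ - x) * g θ)) G1 :=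
      hugint.sub (hhgint.const_mul _)
    have e : (fun θ => ((θ - x) - t) ^ 2 * g θ)
        = fun θ => (u θ * g θ - (2 * t) * ((θ - x) * g θ)) + t ^ 2 * g θ := by
      funext θ; simp only [hudef]; ring
    rw [e, integral_add i1 (hgint.const_mul _), integral_sub hugint (hhgint.const_mul _),
      integral_const_mul, integral_const_mul]
  have hganti : ∀ a b, u a ≤ u b → g b ≤ g a := by
    intro a b hab
    rw [hgeq, hgeq]
    apply mul_le_mul_of_nonneg_left _ hcpos.le
    apply Real.exp_le_exp.2
    rw [div_le_div_iff_of_pos_right (by positivity : (0:ℝ) < 2 * σ ^ 2)]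
    linarith
  have hUG : ∫ θ, u θ * g θ ∂G1 ≤ (∫ θ, u θ ∂G1) * B := by
    apply cheb_aux huint hgint hugint
    intro a b
    rcases le_total (u a) (u b) with hab | hab
    · exact mul_nonpos_of_nonpos_of_nonneg (by linarith) (by linarith [hganti a b hab])
    · exact mul_nonpos_of_nonneg_of_nonpos (by linarith) (by linarith [hganti b a hab])
  have hUval : ∫ θ, u θ ∂G1 ≤ x ^ 2 + V := by
    have e : u = fun θ => (θ ^ 2 - (2 * x) * θ) + x ^ 2 := by
      funext θ; simp only [hudef]; ring
    have ii : Integrable (fun θ => θ ^ 2 - (2 * x) * θ) G1 := hi2.sub (hi1.const_mul _)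
    rw [e, integral_add ii (integrable_const _),
      integral_sub hi2 (hi1.const_mul _), integral_const_mul, hm0, integral_const]
    simp
    linarith
  have h1 : N ^ 2 ≤ (∫ θ, u θ * g θ ∂G1) * B := by
    rw [hCSexp] at hCS
    have ht2 : t * B = N := by rw [ht]; field_simp
    nlinarith [hCS, hBpos, sq_nonneg (t * B - N)]
  have h2 : (∫ θ, u θ * g θ ∂G1) * B ≤ (x ^ 2 + V) * B ^ 2 := by
    calc (∫ θ, u θ * g θ ∂G1) * B ≤ ((∫ θ, u θ ∂G1) * B) * B :=
          mul_le_mul_of_nonneg_right hUG hBpos.le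
      _ ≤ (x ^ 2 + V) * B ^ 2 := by nlinarith [hBpos, hUval]
  rw [hmx, div_pow, div_le_iff₀ (by positivity : (0:ℝ) < B ^ 2)]
  linarith
end

section
/- Let V > 0. There exists a finite constant C, depending only on V, such that for every Borel probability measure G1 on ℝ with mean zero and variance bounded by V, every σ ≥ 1, every real μ with 0 < |μ| < σ, every u > 0, and every s > 0: ∫_{−∞}^{∞} S_{G1,σ}(s, x) φ_σ(x − μ) dx ≤ C · (1 − G1((−∞, s])) · sinh((μ/σ)(u/σ))/(μ/σ) + 2 Φ̄(u/σ − |μ|/σ). -/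
open MeasureTheory Real Set

set_option maxHeartbeats 1000000

section aux

variable {σ : ℝ}

lemma sqrt_two_pi_sq (hσ : 0 < σ) : Real.sqrt (2 * Real.pi * σ ^ 2) = Real.sqrt (2 * Real.pi) * σ := by
  rw [Real.sqrt_mul (by positivity), Real.sqrt_sq hσ.le]

lemma gauss_pos (hσ : 0 < σ) (t : ℝ) : 0 < gaussDens σ t := by
  simp only [gaussDens]
  have : 0 < Real.sqrt (2 * Real.pi * σ ^ 2) := Real.sqrt_pos.2 (by positivity)
  positivity

lemma gauss_nonneg (hσ : 0 < σ) (t : ℝ) : 0 ≤ gaussDens σ t := (gauss_pos hσ t).le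

lemma gauss_le (t : ℝ) : gaussDens σ t ≤ (Real.sqrt (2 * Real.pi * σ ^ 2))⁻¹ := by
  simp only [gaussDens]
  have h1 : Real.exp (-t ^ 2 / (2 * σ ^ 2)) ≤ 1 := by
    rw [Real.exp_le_one_iff]
    have h2 : (0:ℝ) ≤ t ^ 2 / (2 * σ ^ 2) := by positivity
    rw [neg_div]; linarith
  have h0 : (0:ℝ) ≤ (Real.sqrt (2 * Real.pi * σ ^ 2))⁻¹ := by positivity
  calc (Real.sqrt (2 * Real.pi * σ ^ 2))⁻¹ * Real.exp (-t ^ 2 / (2 * σ ^ 2))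
      ≤ (Real.sqrt (2 * Real.pi * σ ^ 2))⁻¹ * 1 := mul_le_mul_of_nonneg_left h1 h0
    _ = _ := mul_one _

lemma gauss_cont : Continuous fun t => gaussDens σ t := by
  simp only [gaussDens]
  exact continuous_const.mul (Real.continuous_exp.comp (by continuity))

lemma gauss_integrable (hσ : 0 < σ) (c : ℝ) :
    Integrable (fun x : ℝ => gaussDens σ (x - c)) := by
  have hb : (0:ℝ) < (2 * σ ^ 2)⁻¹ := by positivity
  have h1 : Integrable (fun x : ℝ => Real.exp (-(2 * σ ^ 2)⁻¹ * x ^ 2)) :=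
    integrable_exp_neg_mul_sq hb
  have h2 : Integrable (fun x : ℝ =>
      (Real.sqrt (2 * Real.pi * σ ^ 2))⁻¹ * Real.exp (-(2 * σ ^ 2)⁻¹ * (x - c) ^ 2)) :=
    (h1.comp_sub_right c).const_mul _
  refine h2.congr (Filter.Eventually.of_forall fun x => ?_)
  simp only [gaussDens]
  congr 1
  exact congrArg Real.exp (by ring)

lemma std_integrable : Integrable (fun t : ℝ => (Real.sqrt (2 * Real.pi))⁻¹ * Real.exp (-t ^ 2 / 2)) := by
  have h1 : Integrable (fun x : ℝ => Real.exp (-(2:ℝ)⁻¹ * x ^ 2)) :=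
    integrable_exp_neg_mul_sq (by norm_num)
  have h2 : Integrable (fun x : ℝ => (Real.sqrt (2 * Real.pi))⁻¹ * Real.exp (-(2:ℝ)⁻¹ * x ^ 2)) :=
    h1.const_mul _
  refine h2.congr (Filter.Eventually.of_forall fun x => ?_)
  show (Real.sqrt (2 * Real.pi))⁻¹ * Real.exp (-(2:ℝ)⁻¹ * x ^ 2)
      = (Real.sqrt (2 * Real.pi))⁻¹ * Real.exp (-x ^ 2 / 2)
  rw [show -(2:ℝ)⁻¹ * x ^ 2 = -x ^ 2 / 2 by ring]

lemma compPhi_nonneg (x : ℝ) : 0 ≤ compPhi x := by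
  simp only [compPhi]
  refine setIntegral_nonneg measurableSet_Ioi fun t _ => by positivity

lemma compPhi_anti {a b : ℝ} (hab : a ≤ b) : compPhi b ≤ compPhi a := by
  simp only [compPhi]
  refine setIntegral_mono_set std_integrable.integrableOn
    (Filter.Eventually.of_forall fun t => by positivity) ?_
  exact Filter.Eventually.of_forall fun t ht => hab.trans_lt ht

lemma cov_Ioi (hσ : 0 < σ) (a c : ℝ) :
    ∫ x in Ioi a, gaussDens σ (x - c) = compPhi ((a - c) / σ) := by
  have step1 : ∫ x in Ioi a, gaussDens σ (x - c) = ∫ x in Ioi (a - c), gaussDens σ x := by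
    have hmp : MeasurePreserving (fun x : ℝ => x + (-c)) volume volume :=
      measurePreserving_add_right volume (-c)
    have hemb : MeasurableEmbedding (fun x : ℝ => x + (-c)) :=
      (Homeomorph.addRight (-c)).isClosedEmbedding.measurableEmbedding
    have h := hmp.setIntegral_preimage_emb hemb (fun y => gaussDens σ y) (Ioi (a - c))
    rw [preimage_add_const_Ioi] at h
    simp only [sub_neg_eq_add, sub_add_cancel] at h
    rw [← h]
    simp [sub_eq_add_neg]
  rw [step1]
  have hrw : ∀ x : ℝ, gaussDens σ x
      = σ⁻¹ * ((Real.sqrt (2 * Real.pi))⁻¹ * Real.exp (-(σ⁻¹ * x) ^ 2 / 2)) := by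
    intro x
    simp only [gaussDens]
    rw [sqrt_two_pi_sq hσ, mul_inv]
    rw [show -(σ⁻¹ * x) ^ 2 / 2 = -x ^ 2 / (2 * σ ^ 2) by
      rw [div_eq_mul_inv, div_eq_mul_inv, mul_inv, ← inv_pow, mul_pow]; ring]
    ring
  simp_rw [hrw]
  rw [integral_const_mul, integral_comp_mul_left_Ioi
    (fun y => (Real.sqrt (2 * Real.pi))⁻¹ * Real.exp (-y ^ 2 / 2)) (a - c) (inv_pos.2 hσ)]
  rw [inv_inv, smul_eq_mul, ← mul_assoc, inv_mul_cancel₀ hσ.ne', one_mul]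
  rw [show σ⁻¹ * (a - c) = (a - c) / σ from (div_eq_inv_mul _ _).symm]
  rfl

lemma cov_Iic (hσ : 0 < σ) (a c : ℝ) :
    ∫ x in Iic (-a), gaussDens σ (x - c) = compPhi ((a + c) / σ) := by
  have h := integral_comp_neg_Ioi a (fun x => gaussDens σ (x - c))
  rw [← h]
  have heq : ∀ x : ℝ, gaussDens σ (-x - c) = gaussDens σ (x - (-c)) := by
    intro x
    simp only [gaussDens]
    congr 1
    exact congrArg Real.exp (by ring)
  simp_rw [heq, cov_Ioi hσ a (-c)]
  norm_num

end aux

section marg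

variable {V σ : ℝ} {G : Measure ℝ} [IsProbabilityMeasure G]

lemma integrable_gauss_G (hσ : 0 < σ) (x : ℝ) :
    Integrable (fun θ => gaussDens σ (x - θ)) G := by
  refine Integrable.mono' (integrable_const ((Real.sqrt (2 * Real.pi * σ ^ 2))⁻¹))
    ((gauss_cont.comp (continuous_const.sub continuous_id)).aestronglyMeasurable)
    (Filter.Eventually.of_forall fun θ => ?_)
  rw [Real.norm_of_nonneg (gauss_nonneg hσ _)]
  exact gauss_le _

lemma margDens_ge (hσ : 0 < σ) (hG : MeanZeroVarLe G V) (x : ℝ) :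
    (Real.sqrt (2 * Real.pi * σ ^ 2))⁻¹ * Real.exp (-(x ^ 2 + V) / (2 * σ ^ 2))
      ≤ margDens G σ x := by
  obtain ⟨h1, h2, hmean, hvar⟩ := hG
  set c := (Real.sqrt (2 * Real.pi * σ ^ 2))⁻¹ with hc
  have hcpos : 0 < c := by
    rw [hc]; have : 0 < Real.sqrt (2 * Real.pi * σ ^ 2) := Real.sqrt_pos.2 (by positivity)
    positivity
  set g : ℝ → ℝ := fun θ => -(x - θ) ^ 2 / (2 * σ ^ 2) with hgdef
  have hgrw : g = fun θ => (-(2 * σ ^ 2)⁻¹ * x ^ 2 + (2 * σ ^ 2)⁻¹ * (2 * x) * θ)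
      + -(2 * σ ^ 2)⁻¹ * θ ^ 2 := by
    funext θ; simp only [hgdef]; ring
  have hg_int : Integrable g G := by
    rw [hgrw]
    exact ((integrable_const _).add (h1.const_mul _)).add (h2.const_mul _)
  have ia : Integrable (fun θ : ℝ => (2 * σ ^ 2)⁻¹ * (2 * x) * θ) G := h1.const_mul _
  have ib : Integrable (fun θ : ℝ => -(2 * σ ^ 2)⁻¹ * θ ^ 2) G := h2.const_mul _
  have ic : Integrable (fun θ : ℝ => -(2 * σ ^ 2)⁻¹ * x ^ 2 + (2 * σ ^ 2)⁻¹ * (2 * x) * θ) G :=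
    (integrable_const _).add ia
  have hm_eq : ∫ θ, g θ ∂G = -(x ^ 2 + ∫ θ, θ ^ 2 ∂G) / (2 * σ ^ 2) := by
    simp only [hgrw]
    rw [integral_add ic ib, integral_add (integrable_const _) ia, integral_const,
      integral_const_mul, integral_const_mul, hmean]
    simp only [measure_univ, probReal_univ, ENNReal.toReal_one, smul_eq_mul, one_mul, mul_zero, add_zero]
    ring
  set m := ∫ θ, g θ ∂G with hm
  have hg_nonpos : ∀ θ, g θ ≤ 0 := fun θ => by
    have h0 : (0:ℝ) ≤ (x - θ) ^ 2 / (2 * σ ^ 2) := by positivity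
    simp only [hgdef]; rw [neg_div]; linarith
  have int_exp : Integrable (fun θ => Real.exp (g θ)) G := by
    refine Integrable.mono' (integrable_const 1)
      ((Real.continuous_exp.comp (by
        simp only [hgdef]
        exact (((continuous_const.sub continuous_id).pow 2).neg).div_const _)).aestronglyMeasurable)
      (Filter.Eventually.of_forall fun θ => ?_)
    rw [Real.norm_of_nonneg (Real.exp_pos _).le, Real.exp_le_one_iff]
    exact hg_nonpos θ
  have int_lhs : Integrable (fun θ => Real.exp m * (g θ - m + 1)) G :=
    (((hg_int.sub (integrable_const m)).add (integrable_const 1)).const_mul _)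
  have key : ∀ θ, Real.exp m * (g θ - m + 1) ≤ Real.exp (g θ) := fun θ => by
    have h3 := Real.add_one_le_exp (g θ - m)
    have h4 : Real.exp m * (g θ - m + 1) ≤ Real.exp m * Real.exp (g θ - m) :=
      mul_le_mul_of_nonneg_left h3 (Real.exp_pos m).le
    rwa [← Real.exp_add, show m + (g θ - m) = g θ by ring] at h4
  have id1 : Integrable (fun θ : ℝ => g θ - m) G := hg_int.sub (integrable_const m)
  have havg : ∫ θ, (g θ - m + 1) ∂G = 1 := by
    rw [integral_add id1 (integrable_const 1),
      integral_sub hg_int (integrable_const m), integral_const, integral_const]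
    simp [← hm]
  have h5 : Real.exp m ≤ ∫ θ, Real.exp (g θ) ∂G := by
    have h6 := integral_mono int_lhs int_exp key
    rw [integral_const_mul, havg, mul_one] at h6
    exact h6
  have h7 : margDens G σ x = c * ∫ θ, Real.exp (g θ) ∂G := by
    simp only [margDens, gaussDens, ← hc]
    rw [integral_const_mul]
  rw [h7]
  have h8 : Real.exp (-(x ^ 2 + V) / (2 * σ ^ 2)) ≤ Real.exp m := by
    have hpos : (0:ℝ) < 2 * σ ^ 2 := by positivity
    have h9 : -(x ^ 2 + V) / (2 * σ ^ 2) ≤ -(x ^ 2 + ∫ θ, θ ^ 2 ∂G) / (2 * σ ^ 2) :=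
      (div_le_div_iff_of_pos_right hpos).mpr (by linarith)
    exact Real.exp_le_exp.mpr (le_of_le_of_eq h9 hm_eq.symm)
  calc c * Real.exp (-(x ^ 2 + V) / (2 * σ ^ 2)) ≤ c * Real.exp m :=
        mul_le_mul_of_nonneg_left h8 hcpos.le
    _ ≤ c * ∫ θ, Real.exp (g θ) ∂G := mul_le_mul_of_nonneg_left h5 hcpos.le

end marg

section cont

variable {σ : ℝ} {G : Measure ℝ} [IsProbabilityMeasure G]

lemma cont_margDens (hσ : 0 < σ) : Continuous (fun x => margDens G σ x) := by
  simp only [margDens]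
  refine continuous_of_dominated (bound := fun _ => (Real.sqrt (2 * Real.pi * σ ^ 2))⁻¹)
    (fun x => (gauss_cont.comp (continuous_const.sub continuous_id)).aestronglyMeasurable)
    (fun x => Filter.Eventually.of_forall fun θ => ?_) (integrable_const _)
    (Filter.Eventually.of_forall fun θ =>
      gauss_cont.comp (continuous_id.sub continuous_const))
  rw [Real.norm_of_nonneg (gauss_nonneg hσ _)]
  exact gauss_le _

lemma cont_num (hσ : 0 < σ) (s : ℝ) :
    Continuous (fun x => ∫ θ in Ioi s, gaussDens σ (x - θ) ∂G) := by
  have hrw : ∀ x : ℝ, ∫ θ in Ioi s, gaussDens σ (x - θ) ∂G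
      = ∫ θ, (Ioi s).indicator (fun θ => gaussDens σ (x - θ)) θ ∂G := fun x =>
    (integral_indicator measurableSet_Ioi).symm
  simp_rw [hrw]
  refine continuous_of_dominated (bound := fun _ => (Real.sqrt (2 * Real.pi * σ ^ 2))⁻¹)
    (fun x => ((gauss_cont.comp
      (continuous_const.sub continuous_id)).aestronglyMeasurable).indicator measurableSet_Ioi)
    (fun x => Filter.Eventually.of_forall fun θ => ?_) (integrable_const _)
    (Filter.Eventually.of_forall fun θ => ?_)
  · by_cases hθ : θ ∈ Ioi s
    · rw [Set.indicator_of_mem hθ, Real.norm_of_nonneg (gauss_nonneg hσ _)]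
      exact gauss_le _
    · rw [Set.indicator_of_notMem hθ, norm_zero]
      positivity
  · by_cases hθ : θ ∈ Ioi s
    · simp only [Set.indicator_of_mem hθ]
      exact gauss_cont.comp (continuous_id.sub continuous_const)
    · simp only [Set.indicator_of_notMem hθ]
      exact continuous_const

end cont

/-- truncated-integral estimate: for `σ ≥ 1`, `0 < |μ| < σ`, `u > 0`, `s > 0`,
`∫ S_{G1,σ}(s,x) φ_σ(x-μ) dx ≤ C (1 - G1((-∞,s])) sinh((μ/σ)(u/σ))/(μ/σ) + 2Φ̄(u/σ - |μ|/σ)`,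
with `C` depending only on `V`. -/
theorem stmt_12 (V : ℝ) (hV : 0 < V) :
    ∃ C : ℝ, ∀ (G1 : Measure ℝ) [IsProbabilityMeasure G1] (σ μ u s : ℝ),
      MeanZeroVarLe G1 V → 1 ≤ σ → 0 < |μ| → |μ| < σ → 0 < u → 0 < s →
      (∫ x, postSurv G1 σ s x * gaussDens σ (x - μ))
        ≤ C * (1 - (G1 (Set.Iic s)).toReal) *
            (Real.sinh ((μ / σ) * (u / σ)) / (μ / σ)) +
          2 * compPhi (u / σ - |μ| / σ) := by
  refine ⟨2 * Real.exp (V / 2), ?_⟩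
  intro G1 _inst σ μ u s hG hσ1 hμ0 hμσ hu hs
  have hσ : (0:ℝ) < σ := lt_of_lt_of_le one_pos hσ1
  have hμne : μ ≠ 0 := by
    intro hh; rw [hh] at hμ0; simp at hμ0
  set c := (Real.sqrt (2 * Real.pi * σ ^ 2))⁻¹ with hc
  have hsqrt : 0 < Real.sqrt (2 * Real.pi * σ ^ 2) := Real.sqrt_pos.2 (by positivity)
  have hcpos : 0 < c := by rw [hc]; positivity
  set ε := 1 - (G1 (Set.Iic s)).toReal with hε
  have htoReal_le_one : (G1 (Set.Iic s)).toReal ≤ 1 := by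
    have h1 : G1 (Iic s) ≤ 1 := prob_le_one
    calc (G1 (Set.Iic s)).toReal ≤ (1 : ENNReal).toReal := ENNReal.toReal_mono ENNReal.one_ne_top h1
      _ = 1 := ENNReal.toReal_one
  have hε0 : 0 ≤ ε := by rw [hε]; linarith
  have hIoi : (G1 (Ioi s)).toReal = ε := by
    rw [hε]
    rw [show Ioi s = (Iic s)ᶜ from compl_Iic.symm,
      measure_compl measurableSet_Iic (measure_ne_top _ _), measure_univ,
      ENNReal.toReal_sub_of_le prob_le_one ENNReal.one_ne_top]
    simp
  have hf_lb : ∀ x : ℝ, c * Real.exp (-(x ^ 2 + V) / (2 * σ ^ 2)) ≤ margDens G1 σ x :=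
    fun x => margDens_ge hσ hG x
  have hf_pos : ∀ x : ℝ, 0 < margDens G1 σ x := fun x =>
    lt_of_lt_of_le (by positivity) (hf_lb x)
  have hnum_nonneg : ∀ x : ℝ, 0 ≤ ∫ θ in Ioi s, gaussDens σ (x - θ) ∂G1 := fun x =>
    setIntegral_nonneg measurableSet_Ioi fun θ _ => gauss_nonneg hσ _
  have hnum_le_f : ∀ x : ℝ, (∫ θ in Ioi s, gaussDens σ (x - θ) ∂G1) ≤ margDens G1 σ x := fun x =>
    setIntegral_le_integral (integrable_gauss_G hσ x)
      (Filter.Eventually.of_forall fun θ => gauss_nonneg hσ _)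
  have hnum_le : ∀ x : ℝ, (∫ θ in Ioi s, gaussDens σ (x - θ) ∂G1) ≤ c * ε := fun x => by
    calc ∫ θ in Ioi s, gaussDens σ (x - θ) ∂G1 ≤ ∫ θ in Ioi s, c ∂G1 :=
          setIntegral_mono_on (integrable_gauss_G hσ x).integrableOn
            (integrableOn_const (measure_lt_top _ _).ne) measurableSet_Ioi
            fun θ _ => gauss_le _
      _ = (G1 (Ioi s)).toReal • c := setIntegral_const c
      _ = c * ε := by rw [smul_eq_mul, hIoi]; ring
  have hS0 : ∀ x : ℝ, 0 ≤ postSurv G1 σ s x := fun x =>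
    div_nonneg (hnum_nonneg x) (hf_pos x).le
  have hS1 : ∀ x : ℝ, postSurv G1 σ s x ≤ 1 := fun x => by
    simp only [postSurv]
    rw [div_le_one (hf_pos x)]
    exact hnum_le_f x
  set h : ℝ → ℝ := fun x => postSurv G1 σ s x * gaussDens σ (x - μ) with hh
  have hh_nonneg : ∀ x, 0 ≤ h x := fun x => mul_nonneg (hS0 x) (gauss_nonneg hσ _)
  have hh_le : ∀ x, h x ≤ gaussDens σ (x - μ) := fun x => by
    calc h x ≤ 1 * gaussDens σ (x - μ) :=
          mul_le_mul_of_nonneg_right (hS1 x) (gauss_nonneg hσ _)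
      _ = _ := one_mul _
  have hh_cont : Continuous h := by
    simp only [hh, postSurv]
    exact ((cont_num hσ s).div (cont_margDens hσ) fun x => (hf_pos x).ne').mul
      (gauss_cont.comp (continuous_id.sub continuous_const))
  have hh_int : Integrable h := Integrable.mono' (gauss_integrable hσ μ)
    hh_cont.aestronglyMeasurable
    (Filter.Eventually.of_forall fun x => by
      rw [Real.norm_of_nonneg (hh_nonneg x)]; exact hh_le x)
  set a := μ / σ ^ 2 with ha
  have hane : a ≠ 0 := div_ne_zero hμne (by positivity)
  -- pointwise bound
  have hkey : ∀ x : ℝ, h x ≤ ε * c * Real.exp (V / 2) * Real.exp (a * x) := by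
    intro x
    have hlb := hf_lb x
    have hlb_pos : 0 < c * Real.exp (-(x ^ 2 + V) / (2 * σ ^ 2)) := by positivity
    have hdiv : postSurv G1 σ s x
        ≤ (c * ε) / (c * Real.exp (-(x ^ 2 + V) / (2 * σ ^ 2))) := by
      simp only [postSurv]
      exact div_le_div₀ (by positivity) (hnum_le x) hlb_pos hlb
    have hsimp : (c * ε) / (c * Real.exp (-(x ^ 2 + V) / (2 * σ ^ 2)))
        = ε * Real.exp ((x ^ 2 + V) / (2 * σ ^ 2)) := by
      rw [show -(x ^ 2 + V) / (2 * σ ^ 2) = -((x ^ 2 + V) / (2 * σ ^ 2)) by ring,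
        Real.exp_neg]
      field_simp
    have hstep1 : h x ≤ (ε * Real.exp ((x ^ 2 + V) / (2 * σ ^ 2))) * gaussDens σ (x - μ) :=
      mul_le_mul_of_nonneg_right (hsimp ▸ hdiv) (gauss_nonneg hσ _)
    have hstep2 : (ε * Real.exp ((x ^ 2 + V) / (2 * σ ^ 2))) * gaussDens σ (x - μ)
        = ε * c * Real.exp ((x ^ 2 + V) / (2 * σ ^ 2) + -(x - μ) ^ 2 / (2 * σ ^ 2)) := by
      simp only [gaussDens, ← hc, Real.exp_add]
      ring
    have hexpo : (x ^ 2 + V) / (2 * σ ^ 2) + -(x - μ) ^ 2 / (2 * σ ^ 2) ≤ V / 2 + a * x := by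
      have he1 : (x ^ 2 + V) / (2 * σ ^ 2) + -(x - μ) ^ 2 / (2 * σ ^ 2)
          = (V + 2 * μ * x - μ ^ 2) / (2 * σ ^ 2) := by ring
      have h2σ : (0:ℝ) < 2 * σ ^ 2 := by positivity
      have hσ2 : (1:ℝ) ≤ σ ^ 2 := by nlinarith
      rw [he1, div_le_iff₀ h2σ]
      have he2 : (V / 2 + a * x) * (2 * σ ^ 2) = V * σ ^ 2 + 2 * μ * x := by
        rw [ha]; field_simp
      rw [he2]
      nlinarith [sq_nonneg μ]
    have hstep3 : ε * c * Real.exp ((x ^ 2 + V) / (2 * σ ^ 2) + -(x - μ) ^ 2 / (2 * σ ^ 2))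
        ≤ ε * c * Real.exp (V / 2 + a * x) :=
      mul_le_mul_of_nonneg_left (Real.exp_le_exp.mpr hexpo) (by positivity)
    calc h x ≤ (ε * Real.exp ((x ^ 2 + V) / (2 * σ ^ 2))) * gaussDens σ (x - μ) := hstep1
      _ = ε * c * Real.exp ((x ^ 2 + V) / (2 * σ ^ 2) + -(x - μ) ^ 2 / (2 * σ ^ 2)) := hstep2
      _ ≤ ε * c * Real.exp (V / 2 + a * x) := hstep3
      _ = ε * c * Real.exp (V / 2) * Real.exp (a * x) := by rw [Real.exp_add]; ring
  -- split the integral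
  have hsplit : (∫ x, h x)
      = (∫ x in Icc (-u) u, h x) + ∫ x in (Icc (-u) u)ᶜ, h x :=
    (integral_add_compl measurableSet_Icc hh_int).symm
  -- middle part
  have hmid_exp : ∫ x in Icc (-u) u, Real.exp (a * x)
      = (Real.exp (a * u) - Real.exp (a * (-u))) / a := by
    rw [integral_Icc_eq_integral_Ioc,
      ← intervalIntegral.integral_of_le (by linarith : -u ≤ u),
      intervalIntegral.integral_comp_mul_left (fun y => Real.exp y) hane,
      integral_exp, smul_eq_mul]
    ring
  have hW0 : 0 ≤ Real.sinh (a * u) / (μ / σ) := by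
    rcases lt_or_gt_of_ne hμne with hneg | hpos
    · have h1 : a * u ≤ 0 := by
        apply mul_nonpos_of_nonpos_of_nonneg _ hu.le
        rw [ha]
        exact div_nonpos_of_nonpos_of_nonneg hneg.le (by positivity)
      have h2 : Real.sinh (a * u) ≤ 0 := by
        rw [← Real.sinh_zero]
        exact Real.sinh_le_sinh.mpr h1
      exact div_nonneg_of_nonpos h2 (div_nonpos_of_nonpos_of_nonneg hneg.le hσ.le)
    · have h1 : 0 ≤ a * u := by
        apply mul_nonneg _ hu.le
        rw [ha]; positivity
      have h2 : 0 ≤ Real.sinh (a * u) := by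
        rw [← Real.sinh_zero]
        exact Real.sinh_le_sinh.mpr h1
      exact div_nonneg h2 (by positivity)
  have hconv : (Real.exp (a * u) - Real.exp (a * (-u))) / a
      = 2 * σ * (Real.sinh (a * u) / (μ / σ)) := by
    rw [Real.sinh_eq, show a * (-u) = -(a * u) by ring, ha]
    field_simp
  have hcσ : c * σ ≤ 1 := by
    rw [hc, sqrt_two_pi_sq hσ]
    rw [mul_comm (Real.sqrt (2 * Real.pi)) σ, mul_inv]
    have hs1 : (1:ℝ) ≤ Real.sqrt (2 * Real.pi) := by
      rw [show (1:ℝ) = Real.sqrt 1 from (Real.sqrt_one).symm]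
      apply Real.sqrt_le_sqrt
      nlinarith [Real.pi_gt_three]
    calc σ⁻¹ * (Real.sqrt (2 * Real.pi))⁻¹ * σ
        = (Real.sqrt (2 * Real.pi))⁻¹ := by field_simp
      _ ≤ 1 := by
        rw [inv_le_one_iff₀]
        right; exact hs1
  have hmid : (∫ x in Icc (-u) u, h x)
      ≤ 2 * Real.exp (V / 2) * ε * (Real.sinh ((μ / σ) * (u / σ)) / (μ / σ)) := by
    have hbd_int : IntegrableOn (fun x => ε * c * Real.exp (V / 2) * Real.exp (a * x))
        (Icc (-u) u) :=
      (Continuous.integrableOn_Icc (by continuity))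
    have h1 : (∫ x in Icc (-u) u, h x)
        ≤ ∫ x in Icc (-u) u, ε * c * Real.exp (V / 2) * Real.exp (a * x) :=
      setIntegral_mono_on hh_int.integrableOn hbd_int measurableSet_Icc fun x _ => hkey x
    have h2 : ∫ x in Icc (-u) u, ε * c * Real.exp (V / 2) * Real.exp (a * x)
        = ε * c * Real.exp (V / 2) * ((Real.exp (a * u) - Real.exp (a * (-u))) / a) := by
      rw [integral_const_mul, hmid_exp]
    have harg : (μ / σ) * (u / σ) = a * u := by
      rw [ha, div_mul_div_comm, ← sq]
      ring
    rw [harg]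
    calc (∫ x in Icc (-u) u, h x)
        ≤ ε * c * Real.exp (V / 2) * ((Real.exp (a * u) - Real.exp (a * (-u))) / a) := by
          rw [← h2]; exact h1
      _ = (c * σ) * (2 * Real.exp (V / 2) * ε * (Real.sinh (a * u) / (μ / σ))) := by
          rw [hconv]; ring
      _ ≤ 1 * (2 * Real.exp (V / 2) * ε * (Real.sinh (a * u) / (μ / σ))) := by
          apply mul_le_mul_of_nonneg_right hcσ
          positivity
      _ = 2 * Real.exp (V / 2) * ε * (Real.sinh (a * u) / (μ / σ)) := one_mul _
  -- tail part
  have htail : (∫ x in (Icc (-u) u)ᶜ, h x) ≤ 2 * compPhi (u / σ - |μ| / σ) := by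
    have hgint : IntegrableOn (fun x => gaussDens σ (x - μ)) ((Icc (-u) u)ᶜ) :=
      (gauss_integrable hσ μ).integrableOn
    have h1 : (∫ x in (Icc (-u) u)ᶜ, h x) ≤ ∫ x in (Icc (-u) u)ᶜ, gaussDens σ (x - μ) :=
      setIntegral_mono hh_int.integrableOn hgint hh_le
    have h2 : ∫ x in (Icc (-u) u)ᶜ, gaussDens σ (x - μ)
        = (∫ x in Iio (-u), gaussDens σ (x - μ)) + ∫ x in Ioi u, gaussDens σ (x - μ) := by
      rw [show (Icc (-u) u)ᶜ = Iio (-u) ∪ Ioi u by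
        rw [← Ici_inter_Iic, compl_inter, compl_Ici, compl_Iic]]
      exact setIntegral_union (by
          rw [Set.disjoint_left]
          intro x hx1 hx2
          simp only [mem_Iio, mem_Ioi] at hx1 hx2
          linarith) measurableSet_Ioi
        (gauss_integrable hσ μ).integrableOn (gauss_integrable hσ μ).integrableOn
    have hsub : u / σ - |μ| / σ = (u - |μ|) / σ := by ring
    have h3 : (∫ x in Iio (-u), gaussDens σ (x - μ)) ≤ compPhi (u / σ - |μ| / σ) := by
      have e1 : (∫ x in Iio (-u), gaussDens σ (x - μ))
          ≤ ∫ x in Iic (-u), gaussDens σ (x - μ) :=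
        setIntegral_mono_set (gauss_integrable hσ μ).integrableOn
          (Filter.Eventually.of_forall fun x => gauss_nonneg hσ _)
          (HasSubset.Subset.eventuallyLE Iio_subset_Iic_self)
      rw [cov_Iic hσ u μ] at e1
      refine e1.trans (compPhi_anti ?_)
      rw [hsub]
      apply div_le_div_of_nonneg_right ?_ hσ.le
      · have := neg_abs_le μ
        linarith
    have h4 : (∫ x in Ioi u, gaussDens σ (x - μ)) ≤ compPhi (u / σ - |μ| / σ) := by
      rw [cov_Ioi hσ u μ]
      refine compPhi_anti ?_
      rw [hsub]
      apply div_le_div_of_nonneg_right ?_ hσ.le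
      · have := le_abs_self μ
        linarith
    calc (∫ x in (Icc (-u) u)ᶜ, h x)
        ≤ ∫ x in (Icc (-u) u)ᶜ, gaussDens σ (x - μ) := h1
      _ = (∫ x in Iio (-u), gaussDens σ (x - μ)) + ∫ x in Ioi u, gaussDens σ (x - μ) := h2
      _ ≤ compPhi (u / σ - |μ| / σ) + compPhi (u / σ - |μ| / σ) := add_le_add h3 h4
      _ = 2 * compPhi (u / σ - |μ| / σ) := by ring
  calc (∫ x, h x)
      = (∫ x in Icc (-u) u, h x) + ∫ x in (Icc (-u) u)ᶜ, h x := hsplit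
    _ ≤ 2 * Real.exp (V / 2) * ε * (Real.sinh ((μ / σ) * (u / σ)) / (μ / σ))
        + 2 * compPhi (u / σ - |μ| / σ) := add_le_add hmid htail
    _ = 2 * Real.exp (V / 2) * (1 - (G1 (Set.Iic s)).toReal) *
          (Real.sinh ((μ / σ) * (u / σ)) / (μ / σ)) + 2 * compPhi (u / σ - |μ| / σ) := by
        rw [hε]
end
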